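/- arXiv:2211.11904 — 9 statements merged into one kernel-verified Lean document; each statement's English description precedes it below -/
import Mathlib

section
/- Fix n ≥ 3 and ρ* ∈ (0,1)^n. If ρ ∈ (0,1)^n satisfies F(ρ) = ρ (i.e., ρ is an interior fixed point of the population EM update), then ρ = ρ*. -/
open Finset

/-- Conditional-mean coefficients for the one-latent-node Gaussian tree model. -/
noncomputable def lam (n : ℕ) (ρ : Fin n → ℝ) (j : Fin n) : ℝ :=
  (ρ j / (1 - ρ j ^ 2)) / (1 + ∑ k, ρ k ^ 2 / (1 - ρ k ^ 2))

/-- Population EM update map `F` for true correlations `ρs`. -/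
noncomputable def emF (n : ℕ) (ρs ρ : Fin n → ℝ) (i : Fin n) : ℝ :=
  (ρ i + ∑ j ∈ Finset.univ.erase i, (ρs i * ρs j - ρ i * ρ j) * lam n ρ j) /
    Real.sqrt (1 + ∑ j, ∑ k ∈ Finset.univ.erase j,
      (ρs j * ρs k - ρ j * ρ k) * lam n ρ j * lam n ρ k)

lemma core_ratio (n : ℕ) (hn : 3 ≤ n) (t u : Fin n → ℝ)
    (ht : ∀ i, 0 < t i) (hu : ∀ i, 0 < u i)
    (hstar : ∀ i, t i * ∑ j ∈ Finset.univ.erase i, t j * u j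
      = ∑ j ∈ Finset.univ.erase i, u j) :
    ∀ i, t i = 1 := by
  have hpos : ∀ i : Fin n, (0:ℝ) < ∑ j ∈ Finset.univ.erase i, u j := by
    intro i
    apply Finset.sum_pos (fun j _ => hu j)
    rw [← Finset.card_pos, Finset.card_erase_of_mem (Finset.mem_univ i),
      Finset.card_univ, Fintype.card_fin]
    omega
  have hnpos : 0 < n := by omega
  obtain ⟨M, -, hM⟩ := Finset.exists_max_image Finset.univ t ⟨⟨0, hnpos⟩, Finset.mem_univ _⟩
  obtain ⟨Lo, -, hLo⟩ := Finset.exists_min_image Finset.univ t ⟨⟨0, hnpos⟩, Finset.mem_univ _⟩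
  have hM' : ∀ j, t j ≤ t M := fun j => hM j (Finset.mem_univ j)
  have hLo' : ∀ j, t Lo ≤ t j := fun j => hLo j (Finset.mem_univ j)
  rcases eq_or_lt_of_le (hLo' M) with heq | hlt
  · -- max = min : all equal
    have hall : ∀ j, t j = t M := fun j => le_antisymm (hM' j) (heq ▸ hLo' j)
    have e1 := hstar M
    have hsub : ∑ j ∈ Finset.univ.erase M, t j * u j
        = t M * ∑ j ∈ Finset.univ.erase M, u j := by
      rw [Finset.mul_sum]
      exact Finset.sum_congr rfl fun j _ => by rw [hall j]
    rw [hsub] at e1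
    have h2 : (t M ^ 2 - 1) * (∑ j ∈ Finset.univ.erase M, u j) = 0 := by
      linear_combination e1
    have h3 : t M ^ 2 = 1 := by
      rcases mul_eq_zero.mp h2 with h | h
      · linarith
      · exact absurd h (hpos M).ne'
    have h4 : (t M - 1) * (t M + 1) = 0 := by linear_combination h3
    have h5 : t M = 1 := by
      rcases mul_eq_zero.mp h4 with h | h
      · linarith
      · linarith [ht M]
    intro i; rw [hall i, h5]
  · exfalso
    have hMne : Lo ≠ M := fun h => absurd (h ▸ hlt) (lt_irrefl _)
    have e1 := hstar M
    have e2 := hstar Lo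
    have i1 : t Lo * ∑ j ∈ Finset.univ.erase M, u j
        ≤ ∑ j ∈ Finset.univ.erase M, t j * u j := by
      rw [Finset.mul_sum]
      exact Finset.sum_le_sum fun j _ => mul_le_mul_of_nonneg_right (hLo' j) (hu j).le
    have i2 : ∑ j ∈ Finset.univ.erase Lo, t j * u j
        ≤ t M * ∑ j ∈ Finset.univ.erase Lo, u j := by
      rw [Finset.mul_sum]
      exact Finset.sum_le_sum fun j _ => mul_le_mul_of_nonneg_right (hM' j) (hu j).le
    have hle : t M * t Lo ≤ 1 := by nlinarith [hpos M, ht M, i1, e1]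
    have hge : 1 ≤ t M * t Lo := by nlinarith [hpos Lo, ht Lo, i2, e2]
    have heq : t M * t Lo = 1 := le_antisymm hle hge
    -- equality forces constancy off M and off Lo
    have h3 : (∑ j ∈ Finset.univ.erase M, t j * u j)
        = t Lo * ∑ j ∈ Finset.univ.erase M, u j := by
      rw [← e1, ← mul_assoc, mul_comm (t Lo) (t M), heq, one_mul]
    have h4 : t M * ∑ j ∈ Finset.univ.erase Lo, u j
        = ∑ j ∈ Finset.univ.erase Lo, t j * u j := by
      rw [← e2, ← mul_assoc, heq, one_mul]
    have hzero1 : ∑ j ∈ Finset.univ.erase M, (t j - t Lo) * u j = 0 := by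
      have : ∑ j ∈ Finset.univ.erase M, (t j - t Lo) * u j
          = (∑ j ∈ Finset.univ.erase M, t j * u j)
            - t Lo * ∑ j ∈ Finset.univ.erase M, u j := by
        rw [Finset.mul_sum, ← Finset.sum_sub_distrib]
        exact Finset.sum_congr rfl fun j _ => by ring
      rw [this, h3, sub_self]
    have hzero2 : ∑ j ∈ Finset.univ.erase Lo, (t M - t j) * u j = 0 := by
      have : ∑ j ∈ Finset.univ.erase Lo, (t M - t j) * u j
          = t M * (∑ j ∈ Finset.univ.erase Lo, u j)
            - ∑ j ∈ Finset.univ.erase Lo, t j * u j := by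
        rw [Finset.mul_sum, ← Finset.sum_sub_distrib]
        exact Finset.sum_congr rfl fun j _ => by ring
      rw [this, h4, sub_self]
    have hall1 : ∀ j ∈ Finset.univ.erase M, t j = t Lo := by
      intro j hj
      have hterm := (Finset.sum_eq_zero_iff_of_nonneg
        (fun j _ => mul_nonneg (sub_nonneg.mpr (hLo' j)) (hu j).le)).mp hzero1 j hj
      rcases mul_eq_zero.mp hterm with h | h
      · linarith [sub_eq_zero.mp h]
      · exact absurd h (hu j).ne'
    have hall2 : ∀ j ∈ Finset.univ.erase Lo, t j = t M := by
      intro j hj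
      have hterm := (Finset.sum_eq_zero_iff_of_nonneg
        (fun j _ => mul_nonneg (sub_nonneg.mpr (hM' j)) (hu j).le)).mp hzero2 j hj
      rcases mul_eq_zero.mp hterm with h | h
      · linarith [sub_eq_zero.mp h]
      · exact absurd h (hu j).ne'
    have hcard : 0 < ((Finset.univ.erase M).erase Lo).card := by
      rw [Finset.card_erase_of_mem (Finset.mem_erase.mpr ⟨hMne, Finset.mem_univ _⟩),
        Finset.card_erase_of_mem (Finset.mem_univ _), Finset.card_univ, Fintype.card_fin]
      omega
    obtain ⟨k, hk⟩ := Finset.card_pos.mp hcard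
    have hkLo : k ≠ Lo := (Finset.mem_erase.mp hk).1
    have hkM : k ≠ M := (Finset.mem_erase.mp (Finset.mem_erase.mp hk).2).1
    have e3 := hall1 k (Finset.mem_erase.mpr ⟨hkM, Finset.mem_univ _⟩)
    have e4 := hall2 k (Finset.mem_erase.mpr ⟨hkLo, Finset.mem_univ _⟩)
    linarith

/-- The only interior fixed point of the population EM update is the true parameter. -/
theorem interior_fixed_point_unique (n : ℕ) (hn : 3 ≤ n) (ρs ρ : Fin n → ℝ)
    (hρs : ∀ i, ρs i ∈ Set.Ioo (0 : ℝ) 1) (hρ : ∀ i, ρ i ∈ Set.Ioo (0 : ℝ) 1)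
    (hfix : emF n ρs ρ = ρ) : ρ = ρs := by
  have hnpos : 0 < n := by omega
  have h1 : ∀ i, 0 < 1 - ρ i ^ 2 := fun i => by nlinarith [(hρ i).1, (hρ i).2]
  have hSum0 : (0:ℝ) ≤ ∑ k, ρ k ^ 2 / (1 - ρ k ^ 2) :=
    Finset.sum_nonneg fun k _ => div_nonneg (sq_nonneg _) (h1 k).le
  have hSpos : (0:ℝ) < 1 + ∑ k, ρ k ^ 2 / (1 - ρ k ^ 2) := by linarith
  have hlam : ∀ j, 0 < lam n ρ j := fun j =>
    div_pos (div_pos (hρ j).1 (h1 j)) hSpos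
  -- B = ∑ ρ j * λ j < 1
  have hB : ∑ j, ρ j * lam n ρ j
      = (∑ k, ρ k ^ 2 / (1 - ρ k ^ 2)) / (1 + ∑ k, ρ k ^ 2 / (1 - ρ k ^ 2)) := by
    rw [Finset.sum_div]
    refine Finset.sum_congr rfl fun j _ => ?_
    unfold lam
    have := (h1 j).ne'
    have := hSpos.ne'
    field_simp
  have hBlt : ∑ j, ρ j * lam n ρ j < 1 := by
    rw [hB, div_lt_one hSpos]; linarith
  set R := 1 + ∑ j, ∑ k ∈ Finset.univ.erase j,
      (ρs j * ρs k - ρ j * ρ k) * lam n ρ j * lam n ρ k with hRdef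
  have hDpos : 0 < Real.sqrt R := by
    rcases lt_or_eq_of_le (Real.sqrt_nonneg R) with h | h
    · exact h
    · exfalso
      have h0 := congrFun hfix ⟨0, hnpos⟩
      unfold emF at h0
      rw [← hRdef, ← h, div_zero] at h0
      exact absurd h0.symm (ne_of_gt (hρ ⟨0, hnpos⟩).1)
  have hDsq : Real.sqrt R ^ 2 = R := Real.sq_sqrt (Real.sqrt_pos.mp hDpos).le
  have hfix' : ∀ i, ρ i + ∑ j ∈ Finset.univ.erase i,
      (ρs i * ρs j - ρ i * ρ j) * lam n ρ j = ρ i * Real.sqrt R := by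
    intro i
    have h0 := congrFun hfix i
    unfold emF at h0
    rw [← hRdef] at h0
    exact (div_eq_iff hDpos.ne').mp h0
  -- weighted sum identity
  have hRB : (∑ j, ρ j * lam n ρ j) + (R - 1)
      = Real.sqrt R * (∑ j, ρ j * lam n ρ j) := by
    have hL : ∑ i, lam n ρ i * (ρ i + ∑ j ∈ Finset.univ.erase i,
        (ρs i * ρs j - ρ i * ρ j) * lam n ρ j)
        = (∑ j, ρ j * lam n ρ j) + (R - 1) := by
      rw [hRdef, add_sub_cancel_left, ← Finset.sum_add_distrib]
      refine Finset.sum_congr rfl fun i _ => ?_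
      rw [mul_add, Finset.mul_sum]
      congr 1
      · ring
      · exact Finset.sum_congr rfl fun j _ => by ring
    have hRsum : ∑ i, lam n ρ i * (ρ i + ∑ j ∈ Finset.univ.erase i,
        (ρs i * ρs j - ρ i * ρ j) * lam n ρ j)
        = Real.sqrt R * (∑ j, ρ j * lam n ρ j) := by
      rw [Finset.mul_sum]
      refine Finset.sum_congr rfl fun i _ => ?_
      rw [hfix' i]; ring
    rw [← hL, hRsum]
  have hfac : (Real.sqrt R - 1) * (Real.sqrt R + 1 - ∑ j, ρ j * lam n ρ j) = 0 := by
    linear_combination hRB + hDsq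
  have hD1 : Real.sqrt R = 1 := by
    rcases mul_eq_zero.mp hfac with h | h
    · linarith
    · exfalso; linarith
  have hE : ∀ i, ∑ j ∈ Finset.univ.erase i,
      (ρs i * ρs j - ρ i * ρ j) * lam n ρ j = 0 := by
    intro i
    have h0 := hfix' i
    rw [hD1, mul_one] at h0
    linarith
  have hstar : ∀ i, ρs i * ∑ j ∈ Finset.univ.erase i, ρs j * lam n ρ j
      = ρ i * ∑ j ∈ Finset.univ.erase i, ρ j * lam n ρ j := by
    intro i
    rw [← sub_eq_zero, Finset.mul_sum, Finset.mul_sum, ← Finset.sum_sub_distrib, ← hE i]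
    exact Finset.sum_congr rfl fun j _ => by ring
  have hcore := core_ratio n hn (fun i => ρs i / ρ i) (fun i => ρ i * lam n ρ i)
    (fun i => div_pos (hρs i).1 (hρ i).1)
    (fun i => mul_pos (hρ i).1 (hlam i))
    (fun i => by
      have hrw : ∑ j ∈ Finset.univ.erase i, (ρs j / ρ j) * (ρ j * lam n ρ j)
          = ∑ j ∈ Finset.univ.erase i, ρs j * lam n ρ j := by
        refine Finset.sum_congr rfl fun j _ => ?_
        have hj := (hρ j).1.ne'
        field_simp
      show (ρs i / ρ i) * ∑ j ∈ Finset.univ.erase i, (ρs j / ρ j) * (ρ j * lam n ρ j)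
          = ∑ j ∈ Finset.univ.erase i, ρ j * lam n ρ j
      rw [hrw, div_mul_eq_mul_div, hstar i]
      exact mul_div_cancel_left₀ _ (hρ i).1.ne')
  funext i
  have hi := hcore i
  have : ρs i / ρ i = 1 := hi
  exact ((div_eq_one_iff_eq (hρ i).1.ne').mp this).symm
end

section
/- Let n ≥ 3 and let u, v ∈ ℝ^n have all entries strictly positive. If for every index j one has u_j · (Σ_{i≠j} u_i) = v_j · (Σ_{i≠j} v_i), then u = v. (Uniqueness of positive solutions of the degree-2 polynomial system arising from the EM fixed-point equations.) -/
open Finset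

private lemma aux_sum_lt (n : ℕ) (hn : 3 ≤ n) (u v : Fin n → ℝ)
    (hu : ∀ i, 0 < u i) (hv : ∀ i, 0 < v i)
    (h : ∀ j, u j * ((∑ i, u i) - u j) = v j * ((∑ i, v i) - v j))
    (hST : ∑ i, v i < ∑ i, u i) : False := by
  classical
  set S := ∑ i, u i with hS
  set T := ∑ i, v i with hT
  have hnpos : 0 < n := by omega
  -- sum of two entries is at most the total
  have hsum2 : ∀ (j k : Fin n), j ≠ k → u j + u k ≤ S := by
    intro j k hjk
    calc u j + u k = ∑ i ∈ ({j, k} : Finset (Fin n)), u i := (Finset.sum_pair hjk).symm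
      _ ≤ S := Finset.sum_le_sum_of_subset_of_nonneg (subset_univ _)
          (fun i _ _ => (hu i).le)
  have hne : ∀ j, u j ≠ v j := by
    intro j hj
    have key2 : (v j - u j) * (S - (u j + v j)) = v j * (S - T) := by
      linear_combination - h j
    rw [hj, sub_self, zero_mul] at key2
    nlinarith [mul_pos (hv j) (sub_pos.mpr hST)]
  have hbig : ∀ j, v j < u j → S < u j + v j := by
    intro j hj
    have key2 : (v j - u j) * (S - (u j + v j)) = v j * (S - T) := by
      linear_combination - h j
    by_contra hle
    push_neg at hle
    nlinarith [mul_pos (hv j) (sub_pos.mpr hST),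
      mul_nonneg (sub_nonneg.mpr hj.le) (sub_nonneg.mpr hle)]
  obtain ⟨j0, hj0⟩ : ∃ j, v j < u j := by
    by_contra hc
    push_neg at hc
    have huniv : (univ : Finset (Fin n)).Nonempty := ⟨⟨0, hnpos⟩, mem_univ _⟩
    have : S < T := Finset.sum_lt_sum_of_nonempty huniv
      (fun j _ => lt_of_le_of_ne (hc j) (hne j))
    linarith
  have hBlt : ∀ j, j ≠ j0 → u j < v j := by
    intro j hjj0
    rcases lt_or_ge (u j) (v j) with h1 | h1
    · exact h1
    · exfalso
      have h1' : v j < u j := lt_of_le_of_ne h1 (fun e => hne j e.symm)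
      have A := hbig j h1'
      have B := hbig j0 hj0
      have C := hsum2 j j0 hjj0
      have D := hsum2 j0 j (Ne.symm hjj0)
      linarith
  -- existence of a third index
  have hthird : ∀ (j : Fin n), j ≠ j0 → ∃ k, k ≠ j0 ∧ k ≠ j := by
    intro j hj
    by_contra hc
    push_neg at hc
    have hsub : (univ : Finset (Fin n)) ⊆ {j0, j} := by
      intro k _
      simp only [mem_insert, mem_singleton]
      by_cases hk : k = j0
      · exact Or.inl hk
      · exact Or.inr (hc k hk)
    have h1 := Finset.card_le_card hsub
    have h2 : ({j0, j} : Finset (Fin n)).card ≤ 2 := by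
      apply le_trans (Finset.card_insert_le _ _)
      simp
    rw [Finset.card_univ, Fintype.card_fin] at h1
    omega
  have hPe : ∑ i ∈ univ.erase j0, u i = S - u j0 :=
    Finset.sum_erase_eq_sub (mem_univ j0)
  have hQe : ∑ i ∈ univ.erase j0, v i = T - v j0 :=
    Finset.sum_erase_eq_sub (mem_univ j0)
  have hPQ : u j0 * (S - u j0) = v j0 * (T - v j0) := h j0
  -- the main pointwise inequality
  have hmain : ∀ j ∈ univ.erase j0, v j0 * v j < u j0 * u j := by
    intro j hj
    have hjj0 : j ≠ j0 := Finset.ne_of_mem_erase hj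
    obtain ⟨k, hk0, hkj⟩ := hthird j hjj0
    have hpair : ∀ (w : Fin n → ℝ), (∀ i, 0 < w i) →
        w j + w k ≤ ∑ i ∈ univ.erase j0, w i := by
      intro w hw
      have hsub : ({j, k} : Finset (Fin n)) ⊆ univ.erase j0 := by
        intro x hx
        simp only [mem_insert, mem_singleton] at hx
        rcases hx with rfl | rfl <;> simp [hjj0, hk0]
      calc w j + w k = ∑ i ∈ ({j, k} : Finset (Fin n)), w i :=
            (Finset.sum_pair (Ne.symm hkj)).symm
        _ ≤ _ := Finset.sum_le_sum_of_subset_of_nonneg hsub (fun i _ _ => (hw i).le)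
    have h1 : u j + u k ≤ S - u j0 := by rw [← hPe]; exact hpair u hu
    have h2 : v j + v k ≤ T - v j0 := by rw [← hQe]; exact hpair v hv
    have hs : u j + v j < (S - u j0) + (T - v j0) := by
      have := hu k; have := hv k; linarith
    have h3 : 0 < (u j0 - v j0) * ((S - u j0) + (T - v j0) - (u j + v j)) :=
      mul_pos (by linarith) (by linarith)
    have hb1 : v j0 * (S - (u j + v j)) < u j0 * (T - (u j + v j)) := by
      nlinarith [hPQ, h3]
    have hd : 0 < v j - u j := sub_pos.mpr (hBlt j hjj0)
    have key1 : (v j - u j) * (T - (u j + v j)) = u j * (S - T) := by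
      linear_combination - h j
    have hTs : 0 < T - (u j + v j) := by
      by_contra h6
      push_neg at h6
      nlinarith [mul_pos (hu j) (sub_pos.mpr hST),
        mul_nonneg hd.le (neg_nonneg.mpr h6)]
    have e : u j * (S - (u j + v j)) = v j * (T - (u j + v j)) := by
      linear_combination h j
    have e2 : (v j0 * v j) * (T - (u j + v j)) = u j * (v j0 * (S - (u j + v j))) := by
      linear_combination (-(v j0)) * e
    have m := mul_lt_mul_of_pos_left hb1 (hu j)
    have h4 : (v j0 * v j) * (T - (u j + v j)) < (u j0 * u j) * (T - (u j + v j)) := by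
      rw [e2]
      exact m.trans_eq (by ring)
    exact lt_of_mul_lt_mul_right h4 hTs.le
  have hNe : (univ.erase j0).Nonempty := by
    rw [← Finset.card_pos, Finset.card_erase_of_mem (mem_univ j0),
      Finset.card_univ, Fintype.card_fin]
    omega
  have hlt := Finset.sum_lt_sum_of_nonempty hNe hmain
  rw [← Finset.mul_sum, ← Finset.mul_sum, hPe, hQe] at hlt
  linarith [hPQ]

/-- Uniqueness of positive solutions of the degree-2 polynomial system
arising from the EM fixed-point equations. -/
theorem positive_quadratic_system_unique (n : ℕ) (hn : 3 ≤ n) (u v : Fin n → ℝ)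
    (hu : ∀ i, 0 < u i) (hv : ∀ i, 0 < v i)
    (h : ∀ j, u j * ∑ i ∈ Finset.univ.erase j, u i
        = v j * ∑ i ∈ Finset.univ.erase j, v i) :
    u = v := by
  classical
  have h' : ∀ j, u j * ((∑ i, u i) - u j) = v j * ((∑ i, v i) - v j) := by
    intro j
    have hj := h j
    rwa [Finset.sum_erase_eq_sub (mem_univ j), Finset.sum_erase_eq_sub (mem_univ j)] at hj
  rcases lt_trichotomy (∑ i, v i) (∑ i, u i) with hlt | heq | hgt
  · exact (aux_sum_lt n hn u v hu hv h' hlt).elim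
  · -- equal sums
    set S := ∑ i, u i with hS
    have h'' : ∀ j, u j * (S - u j) = v j * (S - v j) := by
      intro j
      have := h' j
      rwa [heq] at this
    have hfac : ∀ j, u j ≠ v j → u j + v j = S := by
      intro j hj
      have key : (u j - v j) * (S - (u j + v j)) = 0 := by
        linear_combination h'' j
      rcases mul_eq_zero.mp key with h1 | h1
      · exact absurd (sub_eq_zero.mp h1) hj
      · linarith [sub_eq_zero.mp h1]
    by_contra hneq
    obtain ⟨j1, hj1⟩ : ∃ j, u j ≠ v j := by
      by_contra hc
      push_neg at hc
      exact hneq (funext hc)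
    set D := Finset.univ.filter (fun j => u j ≠ v j) with hD
    have hj1D : j1 ∈ D := by simp [hD, hj1]
    have hSpos : 0 < S := Finset.sum_pos (fun i _ => hu i) ⟨j1, mem_univ _⟩
    have hsumD : ∑ j ∈ D, (u j + v j) = (D.card : ℝ) * S := by
      rw [Finset.sum_congr rfl (fun j hj => hfac j (by simpa [hD] using hj))]
      simp [Finset.sum_const, nsmul_eq_mul]
    have htot : ∑ j ∈ (univ : Finset (Fin n)), (u j + v j) = 2 * S := by
      rw [Finset.sum_add_distrib, ← hS, ← heq]
      ring
    by_cases hDuniv : D = univ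
    · rw [hDuniv, htot, Finset.card_univ, Fintype.card_fin] at hsumD
      have h3n : (3 : ℝ) ≤ (n : ℝ) := by exact_mod_cast hn
      nlinarith
    · obtain ⟨k, hk⟩ : ∃ k, k ∉ D := by
        by_contra hc
        push_neg at hc
        exact hDuniv (Finset.eq_univ_iff_forall.mpr hc)
      have hstrict : ∑ j ∈ D, (u j + v j) < ∑ j ∈ (univ : Finset (Fin n)), (u j + v j) :=
        Finset.sum_lt_sum_of_subset (Finset.filter_subset _ _) (mem_univ k) hk
          (by have := hu k; have := hv k; linarith)
          (fun i _ _ => by have := hu i; have := hv i; linarith)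
      rw [hsumD, htot] at hstrict
      have hcard2 : (D.card : ℝ) < 2 := by
        by_contra hc
        push_neg at hc
        nlinarith
      have hcard1 : D.card = 1 := by
        have h1 : 1 ≤ D.card := Finset.card_pos.mpr ⟨j1, hj1D⟩
        have h2 : D.card < 2 := by exact_mod_cast hcard2
        omega
      obtain ⟨j, hDj⟩ := Finset.card_eq_one.mp hcard1
      have hjD : j ∈ D := hDj ▸ Finset.mem_singleton_self j
      have hjne : u j ≠ v j := by simpa [hD] using hjD
      have hErase : ∑ i ∈ univ.erase j, u i = ∑ i ∈ univ.erase j, v i := by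
        apply Finset.sum_congr rfl
        intro i hi
        have hij : i ≠ j := (Finset.mem_erase.mp hi).1
        by_contra hne2
        have : i ∈ D := by simp [hD, hne2]
        rw [hDj, Finset.mem_singleton] at this
        exact hij this
      have hu' : u j = S - ∑ i ∈ univ.erase j, u i := by
        have := Finset.sum_erase_eq_sub (s := (univ : Finset (Fin n))) (f := u) (mem_univ j)
        rw [← hS] at this
        linarith
      have hv' : v j = S - ∑ i ∈ univ.erase j, v i := by
        have := Finset.sum_erase_eq_sub (s := (univ : Finset (Fin n))) (f := v) (mem_univ j)
        rw [heq] at this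
        linarith
      apply hjne
      rw [hu', hv', hErase]
  · exact (aux_sum_lt n hn v u hv hu (fun j => (h' j).symm) hgt).elim
end

section
/- Let n ≥ 3 and let u ∈ ℝ^n have all entries strictly positive. Then the matrix U(u) is nonsingular: the only vector a ∈ ℝ^n with U(u)·a = 0 is a = 0. -/
open Finset

/-- The matrix `U(u)` with diagonal entries `∑_{k≠i} u_k` and off-diagonal entries
`U(u)_{ij} = u_j`. -/
def Umat (n : ℕ) (u : Fin n → ℝ) : Matrix (Fin n) (Fin n) ℝ :=
  Matrix.of fun i j => if i = j then ∑ k ∈ Finset.univ.erase i, u k else u j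

/-!
Writing `S = ∑ u_k`, the matrix is `U(u) = diag(S - 2 u_i) + 𝟙 uᵀ`, so `U(u) a = 0` says
`(S - 2 u_i) a_i = -s` for every `i`, where `s = ∑ u_k a_k`. Since `n ≥ 3`, `u_i + u_j < S`
for `i ≠ j`, so at most one `u_i` exceeds `S / 2` and at most one `S - 2 u_i` vanishes.
If `s = 0` this forces `a = 0`. If `s ≠ 0`, then `a_i = -s / (S - 2 u_i)` and `∑ u_i a_i = s`
becomes `∑ u_i / (S - 2 u_i) = -1`, which fails: the sum is positive when all denominators are
positive, and below `-1` when `t = 2 u_{i₀} - S > 0` for some `i₀`, because then every other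
denominator exceeds `t`.
-/

section PositiveWeights

variable {ι : Type*} [Fintype ι] {u : ι → ℝ}

theorem add_lt_sum_of_three_le_card (hu : ∀ i, 0 < u i) (hcard : 3 ≤ Fintype.card ι)
    {i j : ι} (hij : i ≠ j) : u i + u j < ∑ k, u k := by
  classical
  obtain ⟨k, -, hk⟩ := exists_mem_notMem_of_card_lt_card (s := {i, j}) (t := univ)
    (by rw [card_univ, card_pair hij]; omega)
  rw [← sum_pair hij]
  exact sum_lt_sum_of_subset (subset_univ _) (mem_univ k) hk (hu k)
    fun l _ _ => (hu l).le

theorem sum_div_sum_sub_two_mul_lt_neg_one (hu : ∀ i, 0 < u i) (hcard : 3 ≤ Fintype.card ι)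
    {i₀ : ι} (hi₀ : ∑ k, u k < 2 * u i₀) :
    ∑ i, u i / (∑ k, u k - 2 * u i) < -1 := by
  classical
  set S := ∑ k, u k
  set t := 2 * u i₀ - S
  have ht : 0 < t := by linarith
  have hlt : ∀ j ∈ univ.erase i₀, u j / (S - 2 * u j) < u j / t := by
    intro j hj
    have := add_lt_sum_of_three_le_card hu hcard (ne_of_mem_erase hj)
    exact div_lt_div_of_pos_left (hu j) ht (by linarith)
  have hne : (univ.erase i₀).Nonempty :=
    let ⟨j, hj⟩ := Fintype.exists_ne_of_one_lt_card (by omega) i₀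
    ⟨j, mem_erase.2 ⟨hj, mem_univ j⟩⟩
  calc ∑ i, u i / (S - 2 * u i)
      = u i₀ / (S - 2 * u i₀) + ∑ j ∈ univ.erase i₀, u j / (S - 2 * u j) :=
        (add_sum_erase _ _ (mem_univ i₀)).symm
    _ < -u i₀ / t + ∑ j ∈ univ.erase i₀, u j / t := by
        rw [show S - 2 * u i₀ = -t by ring, div_neg, neg_div]
        exact add_lt_add_right (sum_lt_sum_of_nonempty hne hlt) _
    _ = -1 := by
        rw [← sum_div, sum_erase_eq_sub (mem_univ i₀)]
        field_simp
        ring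

theorem sum_div_sum_sub_two_mul_ne_neg_one (hu : ∀ i, 0 < u i) (hcard : 3 ≤ Fintype.card ι)
    (hd : ∀ i, ∑ k, u k - 2 * u i ≠ 0) :
    ∑ i, u i / (∑ k, u k - 2 * u i) ≠ -1 := by
  by_cases hbig : ∃ i₀, ∑ k, u k < 2 * u i₀
  · obtain ⟨i₀, hi₀⟩ := hbig
    exact (sum_div_sum_sub_two_mul_lt_neg_one hu hcard hi₀).ne
  · push Not at hbig
    have hpos : ∀ i, 0 < ∑ k, u k - 2 * u i :=
      fun i => lt_of_le_of_ne (by linarith [hbig i]) (hd i).symm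
    have : 0 ≤ ∑ i, u i / (∑ k, u k - 2 * u i) :=
      sum_nonneg fun i _ => (div_pos (hu i) (hpos i)).le
    linarith

theorem eq_zero_of_forall_sum_sub_two_mul_mul_add_eq_zero (hu : ∀ i, 0 < u i)
    (hcard : 3 ≤ Fintype.card ι) {a : ι → ℝ}
    (ha : ∀ i, (∑ k, u k - 2 * u i) * a i + ∑ k, u k * a k = 0) : a = 0 := by
  set S := ∑ k, u k
  set s := ∑ k, u k * a k with hs
  by_cases hs0 : s = 0
  · have hrow : ∀ i, (S - 2 * u i) * a i = 0 := fun i => by linarith [ha i]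
    funext i
    by_cases hdi : S - 2 * u i = 0
    · have hother : ∀ j ≠ i, a j = 0 := fun j hji => by
        have := add_lt_sum_of_three_le_card hu hcard hji
        exact (mul_eq_zero.1 (hrow j)).resolve_left (by linarith)
      have : s = u i * a i :=
        sum_eq_single i (fun j _ hji => by rw [hother j hji, mul_zero]) (by simp)
      exact (mul_eq_zero.1 (this ▸ hs0)).resolve_left (hu i).ne'
    · exact (mul_eq_zero.1 (hrow i)).resolve_left hdi
  · exfalso
    have hd : ∀ i, S - 2 * u i ≠ 0 := fun i hdi => hs0 (by simpa [hdi] using ha i)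
    have hai : ∀ i, a i = -s / (S - 2 * u i) := fun i => by
      rw [eq_div_iff (hd i)]; linarith [ha i]
    have : s = -s * ∑ i, u i / (S - 2 * u i) := by
      conv_lhs => rw [hs]
      rw [mul_sum]
      exact sum_congr rfl fun i _ => by rw [hai i]; ring
    have hprod : s * (∑ i, u i / (S - 2 * u i) + 1) = 0 := by linear_combination this
    have hsum := (mul_eq_zero.1 hprod).resolve_left hs0
    exact sum_div_sum_sub_two_mul_ne_neg_one hu hcard hd (by linarith)

end PositiveWeights

theorem Umat_eq_diagonal_add (n : ℕ) (u : Fin n → ℝ) :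
    Umat n u = Matrix.diagonal (fun i => ∑ k, u k - 2 * u i) + Matrix.of fun _ j => u j := by
  ext i j
  by_cases hij : i = j
  · subst hij
    simp only [Umat, Matrix.of_apply, ↓reduceIte, sum_erase_eq_sub (mem_univ _), Matrix.add_apply,
      Matrix.diagonal_apply_eq]
    ring
  · simp [Umat, hij]

theorem Umat_mulVec_apply (n : ℕ) (u a : Fin n → ℝ) (i : Fin n) :
    (Umat n u).mulVec a i = (∑ k, u k - 2 * u i) * a i + ∑ k, u k * a k := by
  rw [Umat_eq_diagonal_add, Matrix.add_mulVec, Pi.add_apply, Matrix.mulVec_diagonal]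
  rfl

/-- For `u` with strictly positive entries and `n ≥ 3`, the matrix `U(u)` is nonsingular. -/
theorem Umat_nonsingular (n : ℕ) (hn : 3 ≤ n) (u : Fin n → ℝ) (hu : ∀ i, 0 < u i)
    (a : Fin n → ℝ) (ha : (Umat n u).mulVec a = 0) : a = 0 :=
  eq_zero_of_forall_sum_sub_two_mul_mul_add_eq_zero hu (by simpa using hn)
    fun i => by rw [← Umat_mulVec_apply, ha, Pi.zero_apply]
end

section
/- Let n ≥ 3 and let u ∈ ℝ^n satisfy u_1 ≥ u_2 ≥ … ≥ u_n > 0, and set s = Σ_{i=1}^n u_i. Let a ∈ ℝ^n with ‖a‖₂ = 1 and set K = U(u)·a. If |s − 2u_1| ≤ (n−2)u_n/(8n), then max_i |K_i| ≥ (n−2)u_n/(16n). -/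
open Finset

/-- If the entries of `u` are positive and non-increasing, `a` is a unit vector,
`K = U(u)·a`, and `|s − 2u_1| ≤ (n−2)u_n/(8n)`, then `max_i |K_i| ≥ (n−2)u_n/(16n)`. -/
theorem Umat_not_close_to_half (n : ℕ) (hn : 3 ≤ n) (u : Fin n → ℝ)
    (hmono : Antitone u) (hpos : ∀ i, 0 < u i)
    (a : Fin n → ℝ) (ha : Real.sqrt (∑ i, a i ^ 2) = 1)
    (hs : |(∑ i, u i) - 2 * u ⟨0, by omega⟩|
        ≤ ((n : ℝ) - 2) * u ⟨n - 1, by omega⟩ / (8 * n)) :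
    ∃ i, ((n : ℝ) - 2) * u ⟨n - 1, by omega⟩ / (16 * n) ≤ |(Umat n u).mulVec a i| := by
  by_contra hcon
  push_neg at hcon
  have hi0n : (0:ℕ) < n := by omega
  have hiLn : n - 1 < n := by omega
  set i0 : Fin n := ⟨0, hi0n⟩ with hi0def
  set iL : Fin n := ⟨n-1, hiLn⟩ with hiLdef
  have hNpos : (0:ℝ) < (n:ℝ) := by positivity
  have hN3 : (3:ℝ) ≤ (n:ℝ) := by exact_mod_cast hn
  set s : ℝ := ∑ i, u i with hsdef
  set T : ℝ := ∑ j, u j * a j with hTdef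
  set c : ℝ := ((n:ℝ) - 2) * u iL / (16 * (n:ℝ)) with hc
  have hcon' : ∀ i, |(Umat n u).mulVec a i| < c := fun i => hcon i
  have hs' : |s - 2 * u i0| ≤ 2 * c := by
    have h1 : ((n:ℝ) - 2) * u iL / (8 * (n:ℝ)) = 2 * c := by rw [hc]; ring
    have h2 : |s - 2 * u i0| ≤ ((n:ℝ)-2) * u iL / (8 * (n:ℝ)) := hs
    linarith
  have huL : 0 < u iL := hpos iL
  have hu0 : 0 < u i0 := hpos i0
  have hc_pos : 0 < c := by
    apply div_pos (mul_pos (by linarith) huL) (by linarith)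
  -- the key formula for K i
  have hK : ∀ i, (Umat n u).mulVec a i = (s - 2 * u i) * a i + T := by
    intro i
    simp only [Umat, Matrix.mulVec, dotProduct, Matrix.of_apply]
    rw [← Finset.sum_erase_add _ _ (Finset.mem_univ i)]
    have h1 : ∑ j ∈ univ.erase i,
        (if i = j then (∑ k ∈ univ.erase i, u k) else u j) * a j
        = ∑ j ∈ univ.erase i, u j * a j := by
      refine Finset.sum_congr rfl fun j hj => ?_
      rw [if_neg (fun h => (Finset.mem_erase.mp hj).1 h.symm)]
    rw [h1, if_pos rfl, Finset.sum_erase_eq_sub (Finset.mem_univ i),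
      Finset.sum_erase_eq_sub (Finset.mem_univ i)]
    rw [← hsdef, ← hTdef]
    ring
  -- basic facts about a
  have hsum1 : ∑ i, a i ^ 2 = 1 := by
    rwa [Real.sqrt_eq_one] at ha
  have ha1 : ∀ i, |a i| ≤ 1 := by
    intro i
    have h : a i ^ 2 ≤ 1 := by
      have h := Finset.single_le_sum (f := fun i => a i ^ 2)
        (fun j _ => sq_nonneg _) (Finset.mem_univ i)
      rw [hsum1] at h
      exact h
    rw [← Real.sqrt_sq_eq_abs, show (1:ℝ) = Real.sqrt 1 by simp]
    exact Real.sqrt_le_sqrt (by linarith)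
  -- lower bound for the coefficients s - 2 u i, i ≠ i0
  have hM : ∀ i : Fin n, i ≠ i0 → 16 * (n:ℝ) * c ≤ s - 2 * u i := by
    intro i hi
    have hMc : 16 * (n:ℝ) * c = ((n:ℝ) - 2) * u iL := by
      rw [hc]; field_simp
    rw [hMc]
    have hmem : i ∈ univ.erase i0 := Finset.mem_erase.mpr ⟨hi, Finset.mem_univ i⟩
    have hsplit : ∑ j ∈ (univ.erase i0).erase i, u j = s - u i0 - u i := by
      rw [Finset.sum_erase_eq_sub hmem, Finset.sum_erase_eq_sub (Finset.mem_univ i0),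
        ← hsdef]
    have hcard : ((univ.erase i0).erase i).card = n - 2 := by
      rw [Finset.card_erase_of_mem hmem, Finset.card_erase_of_mem (Finset.mem_univ i0),
        Finset.card_univ, Fintype.card_fin]
      omega
    have hlb : ((n - 2 : ℕ) : ℝ) * u iL ≤ ∑ j ∈ (univ.erase i0).erase i, u j := by
      have := Finset.card_nsmul_le_sum ((univ.erase i0).erase i) u (u iL)
        (fun j _ => hmono (by have hj := j.isLt; simp only [hiLdef, Fin.le_def]; omega))
      rw [hcard] at this
      simpa [nsmul_eq_mul] using this
    have hcast : ((n - 2 : ℕ) : ℝ) = (n:ℝ) - 2 := by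
      push_cast [Nat.cast_sub (by omega : 2 ≤ n)]; ring
    have hui0 : u i ≤ u i0 := hmono (by simp only [hi0def, Fin.le_def]; omega)
    rw [hcast] at hlb
    linarith
  -- |T| is small
  have hT3 : |T| < 3 * c := by
    have hK0 := hcon' i0
    rw [hK i0] at hK0
    have h1 : |(s - 2 * u i0) * a i0| ≤ 2 * c := by
      rw [abs_mul]
      calc |s - 2 * u i0| * |a i0| ≤ (2 * c) * 1 :=
            mul_le_mul hs' (ha1 i0) (abs_nonneg _) (by linarith)
        _ = 2 * c := by ring
    have h2 : |T| ≤ |(s - 2 * u i0) * a i0 + T| + |(s - 2 * u i0) * a i0| := by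
      calc |T| = |((s - 2 * u i0) * a i0 + T) - (s - 2 * u i0) * a i0| := by
            ring_nf
        _ ≤ _ := abs_sub _ _
    linarith
  -- the tail coordinates of a are small
  have ha_small : ∀ i : Fin n, i ≠ i0 → |a i| ≤ 1 / (4 * (n:ℝ)) := by
    intro i hi
    have hKi := hcon' i
    rw [hK i] at hKi
    have hco := hM i hi
    have h1 : |(s - 2 * u i) * a i| ≤ |(s - 2 * u i) * a i + T| + |T| := by
      calc |(s - 2 * u i) * a i| = |((s - 2 * u i) * a i + T) - T| := by ring_nf
        _ ≤ _ := abs_sub _ _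
    have h2 : (s - 2 * u i) * |a i| < 4 * c := by
      have : |(s - 2 * u i) * a i| < 4 * c := by linarith
      rw [abs_mul, abs_of_nonneg (by nlinarith : (0:ℝ) ≤ s - 2 * u i)] at this
      exact this
    have h3 : 16 * (n:ℝ) * c * |a i| ≤ (s - 2 * u i) * |a i| :=
      mul_le_mul_of_nonneg_right hco (abs_nonneg _)
    have h4 : 4 * (n:ℝ) * |a i| ≤ 1 := by nlinarith [abs_nonneg (a i)]
    rw [le_div_iff₀ (by linarith : (0:ℝ) < 4 * (n:ℝ))]
    linarith
  -- hence a i0 is large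
  have ha0 : 1/2 ≤ |a i0| := by
    have hbound : ∀ i ∈ univ.erase i0, a i ^ 2 ≤ (1 / (4 * (n:ℝ)))^2 := by
      intro i hi
      have h := ha_small i (Finset.mem_erase.mp hi).1
      calc a i ^ 2 = |a i| ^ 2 := (sq_abs _).symm
        _ ≤ (1 / (4 * (n:ℝ)))^2 := pow_le_pow_left₀ (abs_nonneg _) h 2
    have hsumtail : ∑ i ∈ univ.erase i0, a i ^ 2 ≤ ((n-1 : ℕ):ℝ) * (1 / (4 * (n:ℝ)))^2 := by
      have := Finset.sum_le_card_nsmul (univ.erase i0) (fun i => a i ^ 2)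
        ((1 / (4 * (n:ℝ)))^2) hbound
      rw [Finset.card_erase_of_mem (Finset.mem_univ i0), Finset.card_univ,
        Fintype.card_fin] at this
      simpa [nsmul_eq_mul] using this
    have hsplit : ∑ i ∈ univ.erase i0, a i ^ 2 = 1 - a i0 ^ 2 := by
      rw [Finset.sum_erase_eq_sub (Finset.mem_univ i0), hsum1]
    have hcast : ((n-1 : ℕ):ℝ) = (n:ℝ) - 1 := by
      push_cast [Nat.cast_sub (by omega : 1 ≤ n)]; ring
    have hquarter : ((n:ℝ) - 1) * (1 / (4 * (n:ℝ)))^2 ≤ 1/4 := by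
      have h1 : (1 / (4 * (n:ℝ)))^2 = 1 / (16 * (n:ℝ)^2) := by
        field_simp; ring
      rw [h1]
      have h2 : ((n:ℝ) - 1) * (1 / (16 * (n:ℝ)^2)) = ((n:ℝ)-1) / (16 * (n:ℝ)^2) := by
        ring
      rw [h2, div_le_div_iff₀ (by positivity) (by norm_num)]
      nlinarith
    rw [hsplit, hcast] at hsumtail
    have hsq : (1:ℝ)/4 ≤ a i0 ^ 2 := by linarith
    rw [← Real.sqrt_sq_eq_abs,
      show (1/2:ℝ) = Real.sqrt (1/4) by
        rw [show (1/4:ℝ) = (1/2)^2 by norm_num, Real.sqrt_sq (by norm_num)]]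
    exact Real.sqrt_le_sqrt hsq
  -- bound the tail of T
  have hRsum : |∑ j ∈ univ.erase i0, u j * a j| ≤ (s - u i0) * (1 / (4 * (n:ℝ))) := by
    calc |∑ j ∈ univ.erase i0, u j * a j|
        ≤ ∑ j ∈ univ.erase i0, |u j * a j| := Finset.abs_sum_le_sum_abs _ _
      _ ≤ ∑ j ∈ univ.erase i0, u j * (1 / (4 * (n:ℝ))) := by
          refine Finset.sum_le_sum fun j hj => ?_
          rw [abs_mul, abs_of_pos (hpos j)]
          exact mul_le_mul_of_nonneg_left (ha_small j (Finset.mem_erase.mp hj).1)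
            (hpos j).le
      _ = (∑ j ∈ univ.erase i0, u j) * (1 / (4 * (n:ℝ))) := by
          rw [Finset.sum_mul]
      _ = (s - u i0) * (1 / (4 * (n:ℝ))) := by
          rw [Finset.sum_erase_eq_sub (Finset.mem_univ i0), ← hsdef]
  -- lower bound for |T|
  have hTsplit : T = u i0 * a i0 + ∑ j ∈ univ.erase i0, u j * a j := by
    rw [hTdef, ← Finset.add_sum_erase _ _ (Finset.mem_univ i0)]
  have hTlow : u i0 * |a i0| - (s - u i0) * (1 / (4 * (n:ℝ))) ≤ |T| := by
    have h1 : |u i0 * a i0| ≤ |T| + |∑ j ∈ univ.erase i0, u j * a j| := by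
      calc |u i0 * a i0| = |T - ∑ j ∈ univ.erase i0, u j * a j| := by
            rw [hTsplit]; ring_nf
        _ ≤ _ := abs_sub _ _
    rw [abs_mul, abs_of_pos hu0] at h1
    linarith
  -- final contradiction
  have hc_u0 : c ≤ u i0 / 16 := by
    rw [hc, div_le_div_iff₀ (by linarith : (0:ℝ) < 16 * (n:ℝ)) (by norm_num : (0:ℝ) < 16)]
    have huL0 : u iL ≤ u i0 := hmono (by simp only [hi0def, hiLdef, Fin.le_def]; omega)
    nlinarith
  have e1 : (s - u i0) * (1 / (4 * (n:ℝ))) ≤ (u i0 + 2 * c) * (1/(12:ℝ)) := by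
    have h1 : (0:ℝ) ≤ 1 / (4 * (n:ℝ)) := by positivity
    have h2 : 1 / (4 * (n:ℝ)) ≤ 1/12 := by
      rw [div_le_div_iff₀ (by linarith : (0:ℝ) < 4 * (n:ℝ)) (by norm_num : (0:ℝ) < 12)]
      linarith
    have h3 : s - u i0 ≤ u i0 + 2 * c := by
      have := (abs_le.mp hs').2
      linarith
    calc (s - u i0) * (1 / (4 * (n:ℝ))) ≤ (u i0 + 2 * c) * (1 / (4 * (n:ℝ))) :=
          mul_le_mul_of_nonneg_right h3 h1
      _ ≤ (u i0 + 2 * c) * (1/(12:ℝ)) :=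
          mul_le_mul_of_nonneg_left h2 (by linarith)
  have e2 : u i0 * (1/2) ≤ u i0 * |a i0| :=
    mul_le_mul_of_nonneg_left ha0 hu0.le
  linarith
end

section
/- Fix n ≥ 2 and ρ* ∈ (0,1)^n. Then F(0) = 0, and for every ρ ∈ [0,1)^n such that ρ_{i₁} > 0 for some index i₁, one has F_i(ρ) > 0 for every index i. Consequently, if ρ ∈ [0,1)^n has some coordinate equal to 0 and some coordinate strictly positive, then F(ρ) ≠ ρ, i.e., ρ is not a fixed point of the population EM update. -/
open Finset

lemma emF_pos_aux (n : ℕ) (ρs : Fin n → ℝ)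
    (hρs : ∀ i, ρs i ∈ Set.Ioo (0 : ℝ) 1) (ρ : Fin n → ℝ)
    (hρ : ∀ i, ρ i ∈ Set.Ico (0 : ℝ) 1) (i₁ : Fin n) (h₁ : 0 < ρ i₁)
    (i : Fin n) : 0 < emF n ρs ρ i := by
  set S : ℝ := ∑ k, ρ k ^ 2 / (1 - ρ k ^ 2) with hSdef
  have hpos1 : ∀ j, 0 < 1 - ρ j ^ 2 := fun j => by
    nlinarith [(hρ j).1, (hρ j).2]
  have hSnn : 0 ≤ S :=
    Finset.sum_nonneg fun k _ => div_nonneg (sq_nonneg _) (hpos1 k).le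
  have hSpos : (0:ℝ) < 1 + S := by linarith
  have hlam_nonneg : ∀ j, 0 ≤ lam n ρ j := fun j =>
    div_nonneg (div_nonneg (hρ j).1 (hpos1 j).le) hSpos.le
  have hlam_pos : ∀ j, 0 < ρ j → 0 < lam n ρ j := fun j hj =>
    div_pos (div_pos hj (hpos1 j)) hSpos
  have hterm : ∀ j, ρ j * lam n ρ j = (ρ j ^ 2 / (1 - ρ j ^ 2)) / (1 + S) := by
    intro j
    unfold lam
    rw [div_div, div_div, ← hSdef]
    rw [mul_div_assoc']
    ring_nf
  have hA : (∑ j, ρ j * lam n ρ j) = S / (1 + S) := by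
    rw [Finset.sum_congr rfl (fun j _ => hterm j), ← Finset.sum_div]
  have hAlt : (∑ j, ρ j * lam n ρ j) < 1 := by
    rw [hA, div_lt_one hSpos]; linarith
  have hAnn : 0 ≤ ∑ j, ρ j * lam n ρ j :=
    Finset.sum_nonneg fun j _ => mul_nonneg (hρ j).1 (hlam_nonneg j)
  -- erase sums bounded by full sums
  have herase_le : ∀ m : Fin n, (∑ j ∈ Finset.univ.erase m, ρ j * lam n ρ j)
      ≤ ∑ j, ρ j * lam n ρ j := fun m =>
    Finset.sum_le_sum_of_subset_of_nonneg (Finset.erase_subset _ _)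
      (fun j _ _ => mul_nonneg (hρ j).1 (hlam_nonneg j))
  -- Denominator positivity
  have hY : (∑ j, ∑ k ∈ Finset.univ.erase j, (ρ j * lam n ρ j) * (ρ k * lam n ρ k))
      ≤ (∑ j, ρ j * lam n ρ j) * (∑ j, ρ j * lam n ρ j) := by
    calc (∑ j, ∑ k ∈ Finset.univ.erase j, (ρ j * lam n ρ j) * (ρ k * lam n ρ k))
        = ∑ j, (ρ j * lam n ρ j) * ∑ k ∈ Finset.univ.erase j, (ρ k * lam n ρ k) := by
          refine Finset.sum_congr rfl fun j _ => ?_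
          rw [Finset.mul_sum]
      _ ≤ ∑ j, (ρ j * lam n ρ j) * ∑ k, ρ k * lam n ρ k := by
          apply Finset.sum_le_sum
          intro j _
          exact mul_le_mul_of_nonneg_left (herase_le j)
            (mul_nonneg (hρ j).1 (hlam_nonneg j))
      _ = (∑ j, ρ j * lam n ρ j) * (∑ j, ρ j * lam n ρ j) := by
          rw [← Finset.sum_mul]
  have hXlb : -(∑ j, ∑ k ∈ Finset.univ.erase j, (ρ j * lam n ρ j) * (ρ k * lam n ρ k))
      ≤ ∑ j, ∑ k ∈ Finset.univ.erase j,
        (ρs j * ρs k - ρ j * ρ k) * lam n ρ j * lam n ρ k := by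
    rw [← Finset.sum_neg_distrib]
    apply Finset.sum_le_sum
    intro j _
    rw [← Finset.sum_neg_distrib]
    apply Finset.sum_le_sum
    intro k _
    have h1 : 0 ≤ ρs j * ρs k * lam n ρ j * lam n ρ k :=
      mul_nonneg (mul_nonneg (mul_nonneg (hρs j).1.le (hρs k).1.le)
        (hlam_nonneg j)) (hlam_nonneg k)
    nlinarith [h1]
  have hden : 0 < 1 + ∑ j, ∑ k ∈ Finset.univ.erase j,
      (ρs j * ρs k - ρ j * ρ k) * lam n ρ j * lam n ρ k := by
    have h2 : (∑ j, ρ j * lam n ρ j) * (∑ j, ρ j * lam n ρ j) < 1 := by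
      nlinarith [hAlt, hAnn]
    nlinarith [hXlb, hY, h2]
  -- Numerator positivity
  have hnum : 0 < ρ i + ∑ j ∈ Finset.univ.erase i,
      (ρs i * ρs j - ρ i * ρ j) * lam n ρ j := by
    have hsplit : (∑ j ∈ Finset.univ.erase i, (ρs i * ρs j - ρ i * ρ j) * lam n ρ j)
        = ρs i * (∑ j ∈ Finset.univ.erase i, ρs j * lam n ρ j)
          - ρ i * (∑ j ∈ Finset.univ.erase i, ρ j * lam n ρ j) := by
      rw [Finset.mul_sum, Finset.mul_sum, ← Finset.sum_sub_distrib]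
      apply Finset.sum_congr rfl
      intro j _
      ring
    rw [hsplit]
    have hT : (∑ j ∈ Finset.univ.erase i, ρ j * lam n ρ j) < 1 :=
      lt_of_le_of_lt (herase_le i) hAlt
    have hBnn : 0 ≤ ∑ j ∈ Finset.univ.erase i, ρs j * lam n ρ j :=
      Finset.sum_nonneg fun j _ => mul_nonneg (hρs j).1.le (hlam_nonneg j)
    rcases eq_or_lt_of_le (hρ i).1 with h0 | hpos
    · -- ρ i = 0, so i₁ ≠ i and B > 0
      have hne : i₁ ≠ i := by
        intro h; rw [h] at h₁; rw [← h0] at h₁; exact lt_irrefl _ h₁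
      have hB : 0 < ∑ j ∈ Finset.univ.erase i, ρs j * lam n ρ j := by
        apply Finset.sum_pos' (fun j _ => mul_nonneg (hρs j).1.le (hlam_nonneg j))
        exact ⟨i₁, Finset.mem_erase.mpr ⟨hne, Finset.mem_univ _⟩,
          mul_pos (hρs i₁).1 (hlam_pos i₁ h₁)⟩
      have := mul_pos (hρs i).1 hB
      nlinarith [(hρ i).1, hT, this]
    · have h1 : 0 < ρs i * (∑ j ∈ Finset.univ.erase i, ρs j * lam n ρ j)
          ∨ True := Or.inr trivial
      have h2 : 0 ≤ ρs i * (∑ j ∈ Finset.univ.erase i, ρs j * lam n ρ j) :=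
        mul_nonneg (hρs i).1.le hBnn
      nlinarith [hT, h2, hpos]
  exact div_pos hnum (Real.sqrt_pos.mpr hden)

/-- `F(0) = 0`; if some coordinate of `ρ` is positive then all coordinates of `F(ρ)`
are positive; consequently a point with a zero and a positive coordinate is not a
fixed point of the population EM update. -/
theorem zero_coordinate_fixed_points (n : ℕ) (hn : 2 ≤ n) (ρs : Fin n → ℝ)
    (hρs : ∀ i, ρs i ∈ Set.Ioo (0 : ℝ) 1) :
    emF n ρs 0 = 0 ∧
    (∀ ρ : Fin n → ℝ, (∀ i, ρ i ∈ Set.Ico (0 : ℝ) 1) → (∃ i₁, 0 < ρ i₁) →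
      ∀ i, 0 < emF n ρs ρ i) ∧
    (∀ ρ : Fin n → ℝ, (∀ i, ρ i ∈ Set.Ico (0 : ℝ) 1) →
      (∃ i₀, ρ i₀ = 0) → (∃ i₁, 0 < ρ i₁) → emF n ρs ρ ≠ ρ) := by
  refine ⟨?_, ?_, ?_⟩
  · funext i
    simp [emF, lam]
  · rintro ρ hρ ⟨i₁, h₁⟩ i
    exact emF_pos_aux n ρs hρs ρ hρ i₁ h₁ i
  · rintro ρ hρ ⟨i₀, h₀⟩ ⟨i₁, h₁⟩ heq
    have hp := emF_pos_aux n ρs hρs ρ hρ i₁ h₁ i₀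
    rw [congrFun heq i₀, h₀] at hp
    exact lt_irrefl _ hp
end

section
/- Fix n ≥ 2 and ρ* ∈ (0,1)^n, and regard F (given by the same formula) as a map on (−1,1)^n. Then F is differentiable at 0 with partial derivatives ∂F_i/∂ρ_j(0) = 1 if i = j and ∂F_i/∂ρ_j(0) = ρ*_i ρ*_j if i ≠ j. Moreover, there exists C > 0 such that for all i, j, k and all ρ ∈ [0,1/2]^n, the second partial derivative ∂²F_i/∂ρ_j∂ρ_k(ρ) satisfies |∂²F_i/∂ρ_j∂ρ_k(ρ)| ≤ C. -/
open Finset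

/-! The uniform bound comes from compactness: the cube `[0,1/2]^n` lies inside the region
`ρ_l² < 1`, `radicand > 0` where `F` is smooth.  The radicand stays positive on `[0,1)^n`
because it is at least `1 - (∑ ρ_l λ_l)²` and `∑ ρ_l λ_l = S / (1 + S) < 1` with
`S = ∑ ρ_l² / (1 - ρ_l²)`.  The first derivatives are read off the coordinate axes:
`λ(t e_j) = t e_j`, the radicand is `1` there, and `F_i(t e_j)` is linear in `t`. -/

section CompactBound

variable {𝕜 : Type*} [NontriviallyNormedField 𝕜] {E F : Type*} [NormedAddCommGroup E]
  [NormedSpace 𝕜 E] [NormedAddCommGroup F] [NormedSpace 𝕜 F]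

theorem IsCompact.exists_pos_bound_norm_iteratedFDeriv {ι : Type*} [Finite ι] {f : ι → E → F}
    {K : Set E} {n : WithTop ℕ∞} {k : ℕ} (hK : IsCompact K)
    (hf : ∀ i, ∀ x ∈ K, ContDiffAt 𝕜 n (f i) x) (hk : k ≤ n) :
    ∃ C > 0, ∀ i, ∀ x ∈ K, ‖iteratedFDeriv 𝕜 k (f i) x‖ ≤ C := by
  have hbound : ∀ i, ∃ C, ∀ x ∈ K, ‖iteratedFDeriv 𝕜 k (f i) x‖ ≤ C := fun i =>
    hK.exists_bound_of_continuousOn fun x hx =>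
      ((hf i x hx).continuousAt_iteratedFDeriv hk).continuousWithinAt
  choose B hB using hbound
  obtain ⟨M, hM⟩ := Finite.exists_le B
  exact ⟨max M 1, by positivity, fun i x hx =>
    (hB i x hx).trans ((hM i).trans (le_max_left _ _))⟩

end CompactBound

noncomputable def emRadicand (n : ℕ) (ρs ρ : Fin n → ℝ) : ℝ :=
  1 + ∑ j, ∑ k ∈ univ.erase j, (ρs j * ρs k - ρ j * ρ k) * lam n ρ j * lam n ρ k

theorem emF_eq (n : ℕ) (ρs ρ : Fin n → ℝ) (i : Fin n) :
    emF n ρs ρ i = (ρ i + ∑ j ∈ univ.erase i, (ρs i * ρs j - ρ i * ρ j) * lam n ρ j) /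
      √(emRadicand n ρs ρ) := rfl

section Smoothness

variable {n : ℕ} {m : WithTop ℕ∞}

theorem contDiffAt_lam {ρ₀ : Fin n → ℝ} (h : ∀ l, ρ₀ l ^ 2 < 1) (j : Fin n) :
    ContDiffAt ℝ m (fun ρ => lam n ρ j) ρ₀ := by
  have hq : ∀ l, 1 - ρ₀ l ^ 2 ≠ 0 := fun l => by linarith [h l]
  have hcoord : ∀ l, ContDiffAt ℝ m (fun ρ : Fin n → ℝ => ρ l) ρ₀ := fun l =>
    (contDiff_apply ℝ ℝ l).contDiffAt
  have hS : 0 ≤ ∑ k, ρ₀ k ^ 2 / (1 - ρ₀ k ^ 2) :=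
    sum_nonneg fun k _ => div_nonneg (sq_nonneg _) (by linarith [h k])
  refine ((hcoord j).div (contDiffAt_const.sub ((hcoord j).pow 2)) (hq j)).div
    (contDiffAt_const.add (ContDiffAt.sum fun k _ =>
      ((hcoord k).pow 2).div (contDiffAt_const.sub ((hcoord k).pow 2)) (hq k))) ?_
  linarith

theorem contDiffAt_emRadicand (ρs : Fin n → ℝ) {ρ₀ : Fin n → ℝ}
    (h : ∀ l, ρ₀ l ^ 2 < 1) :
    ContDiffAt ℝ m (emRadicand n ρs) ρ₀ :=
  contDiffAt_const.add (ContDiffAt.sum fun j _ => ContDiffAt.sum fun k _ =>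
    ((contDiffAt_const.sub ((contDiff_apply ℝ ℝ j).contDiffAt.mul
      (contDiff_apply ℝ ℝ k).contDiffAt)).mul (contDiffAt_lam h j)).mul (contDiffAt_lam h k))

theorem contDiffAt_emF (ρs : Fin n → ℝ) {ρ₀ : Fin n → ℝ} (h : ∀ l, ρ₀ l ^ 2 < 1)
    (hg : 0 < emRadicand n ρs ρ₀) (i : Fin n) :
    ContDiffAt ℝ m (fun ρ => emF n ρs ρ i) ρ₀ := by
  simp only [emF_eq]
  refine ((contDiff_apply ℝ ℝ i).contDiffAt.add (ContDiffAt.sum fun j _ =>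
    (contDiffAt_const.sub ((contDiff_apply ℝ ℝ i).contDiffAt.mul
      (contDiff_apply ℝ ℝ j).contDiffAt)).mul (contDiffAt_lam h j))).div
    ((Real.contDiffAt_sqrt hg.ne').comp ρ₀ (contDiffAt_emRadicand ρs h)) ?_
  exact (Real.sqrt_pos.mpr hg).ne'

end Smoothness

theorem sum_sum_erase_mul_le_sq_sum {ι : Type*} [Fintype ι] [DecidableEq ι] {x : ι → ℝ}
    (hx : ∀ i, 0 ≤ x i) : ∑ j, ∑ k ∈ univ.erase j, x j * x k ≤ (∑ l, x l) ^ 2 := by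
  rw [sq, sum_mul_sum]
  exact sum_le_sum fun j _ => sum_le_sum_of_subset_of_nonneg (erase_subset _ _)
    fun k _ _ => mul_nonneg (hx j) (hx k)

theorem sum_mul_lam {n : ℕ} (ρ : Fin n → ℝ) :
    ∑ l, ρ l * lam n ρ l =
      (∑ k, ρ k ^ 2 / (1 - ρ k ^ 2)) / (1 + ∑ k, ρ k ^ 2 / (1 - ρ k ^ 2)) := by
  rw [sum_div]
  refine sum_congr rfl fun l _ => ?_
  rw [lam]
  ring

theorem emRadicand_pos {n : ℕ} {ρs ρ : Fin n → ℝ} (hρs : ∀ i, 0 ≤ ρs i)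
    (h0 : ∀ l, 0 ≤ ρ l) (h1 : ∀ l, ρ l < 1) : 0 < emRadicand n ρs ρ := by
  set S := ∑ k, ρ k ^ 2 / (1 - ρ k ^ 2)
  have hq : ∀ l, 0 < 1 - ρ l ^ 2 := fun l => by nlinarith [h0 l, h1 l]
  have hS : 0 ≤ S := sum_nonneg fun k _ => div_nonneg (sq_nonneg _) (hq k).le
  have hlam : ∀ l, 0 ≤ lam n ρ l := fun l =>
    div_nonneg (div_nonneg (h0 l) (hq l).le) (by positivity)
  have hx : ∀ l, 0 ≤ ρ l * lam n ρ l := fun l => mul_nonneg (h0 l) (hlam l)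
  have hsq : (S / (1 + S)) ^ 2 < 1 := by
    have hlt : S / (1 + S) < 1 := (div_lt_one (by positivity)).mpr (by linarith)
    nlinarith [div_nonneg hS (by positivity : (0 : ℝ) ≤ 1 + S)]
  have hcross : -(∑ j, ∑ k ∈ univ.erase j, (ρ j * lam n ρ j) * (ρ k * lam n ρ k)) ≤
      ∑ j, ∑ k ∈ univ.erase j, (ρs j * ρs k - ρ j * ρ k) * lam n ρ j * lam n ρ k := by
    simp only [← sum_neg_distrib]
    refine sum_le_sum fun j _ => sum_le_sum fun k _ => ?_
    nlinarith [mul_nonneg (mul_nonneg (mul_nonneg (hρs j) (hρs k)) (hlam j)) (hlam k)]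
  have hoff := sum_sum_erase_mul_le_sq_sum hx
  rw [sum_mul_lam] at hoff
  rw [emRadicand]
  linarith

section CoordinateAxes

variable {n : ℕ}

theorem lam_single (j k : Fin n) {t : ℝ} (ht : t ^ 2 < 1) :
    lam n (Pi.single j t) k = (Pi.single j t : Fin n → ℝ) k := by
  have hsum : ∑ l, (Pi.single j t : Fin n → ℝ) l ^ 2 /
      (1 - (Pi.single j t : Fin n → ℝ) l ^ 2) = t ^ 2 / (1 - t ^ 2) := by
    rw [sum_eq_single j (fun l _ hl => by simp [Pi.single_eq_of_ne hl]) (by simp)]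
    simp
  have hne : (1 : ℝ) - t ^ 2 ≠ 0 := by linarith
  rw [lam, hsum]
  rcases eq_or_ne k j with rfl | hkj
  · simp only [Pi.single_eq_same]
    field_simp
    ring
  · simp [Pi.single_eq_of_ne hkj]

theorem emRadicand_single (ρs : Fin n → ℝ) (j : Fin n) {t : ℝ} (ht : t ^ 2 < 1) :
    emRadicand n ρs (Pi.single j t) = 1 := by
  rw [emRadicand, add_eq_left]
  refine sum_eq_zero fun j' _ => sum_eq_zero fun k hk => ?_
  simp only [lam_single _ _ ht]
  rcases eq_or_ne k j with rfl | hkj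
  · simp [Pi.single_eq_of_ne (mem_erase.mp hk).1.symm]
  · simp [Pi.single_eq_of_ne hkj]

theorem emF_single (ρs : Fin n → ℝ) (i j : Fin n) {t : ℝ} (ht : t ^ 2 < 1) :
    emF n ρs (Pi.single j t) i = (if i = j then 1 else ρs i * ρs j) * t := by
  rw [emF_eq, emRadicand_single ρs j ht, Real.sqrt_one, div_one]
  simp only [lam_single _ _ ht]
  rcases eq_or_ne i j with rfl | hij
  · rw [sum_eq_zero fun k hk => by simp [Pi.single_eq_of_ne (mem_erase.mp hk).1]]
    simp
  · rw [sum_eq_single_of_mem j (mem_erase.mpr ⟨hij.symm, mem_univ j⟩)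
      fun k _ hkj => by simp [Pi.single_eq_of_ne hkj]]
    simp [hij]

theorem fderiv_emF_zero_single (ρs : Fin n → ℝ) (i j : Fin n)
    (hdiff : DifferentiableAt ℝ (fun ρ => emF n ρs ρ i) 0) :
    fderiv ℝ (fun ρ => emF n ρs ρ i) 0 (Pi.single j 1) =
      if i = j then 1 else ρs i * ρs j := by
  rw [← hdiff.lineDeriv_eq_fderiv, lineDeriv]
  have hline : (fun t : ℝ => emF n ρs (0 + t • Pi.single j 1) i)
      =ᶠ[nhds 0] fun t => (if i = j then 1 else ρs i * ρs j) * t := by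
    filter_upwards [Ioo_mem_nhds (by norm_num : (-1 : ℝ) < 0) one_pos] with t ht
    rw [zero_add, ← Pi.single_smul, smul_eq_mul, mul_one,
      emF_single ρs i j (by nlinarith [ht.1, ht.2])]
  rw [hline.deriv_eq]
  exact ((hasDerivAt_id (0 : ℝ)).const_mul _).deriv.trans (mul_one _)

end CoordinateAxes

theorem emF_derivatives_at_zero_general (n : ℕ) (ρs : Fin n → ℝ)
    (hρs : ∀ i, ρs i ∈ Set.Ioo (0 : ℝ) 1) :
    (∀ i : Fin n, DifferentiableAt ℝ (fun ρ => emF n ρs ρ i) (0 : Fin n → ℝ)) ∧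
    (∀ i j : Fin n,
      fderiv ℝ (fun ρ => emF n ρs ρ i) (0 : Fin n → ℝ) (Pi.single j 1)
        = if i = j then 1 else ρs i * ρs j) ∧
    (∃ C > (0 : ℝ), ∀ (i j k : Fin n) (ρ : Fin n → ℝ),
      (∀ l, ρ l ∈ Set.Icc (0 : ℝ) (1 / 2)) →
      |iteratedFDeriv ℝ 2 (fun ρ' => emF n ρs ρ' i) ρ ![Pi.single j 1, Pi.single k 1]|
        ≤ C) := by
  set K : Set (Fin n → ℝ) := Set.univ.pi fun _ => Set.Icc 0 (1 / 2)
  have hsmooth : ∀ i, ∀ ρ ∈ K, ContDiffAt ℝ 2 (fun ρ' => emF n ρs ρ' i) ρ := by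
    intro i ρ hρ
    have hρ' : ∀ l, ρ l ∈ Set.Icc (0 : ℝ) (1 / 2) := fun l => hρ l (Set.mem_univ l)
    refine contDiffAt_emF ρs (fun l => by nlinarith [(hρ' l).1, (hρ' l).2]) ?_ i
    exact emRadicand_pos (fun i => (hρs i).1.le) (fun l => (hρ' l).1)
      (fun l => (hρ' l).2.trans_lt (by norm_num))
  have hdiff : ∀ i, DifferentiableAt ℝ (fun ρ => emF n ρs ρ i) 0 := fun i =>
    (hsmooth i 0 fun l _ => by norm_num).differentiableAt (by norm_num)
  refine ⟨hdiff, fun i j => fderiv_emF_zero_single ρs i j (hdiff i), ?_⟩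
  have hK : IsCompact K := isCompact_univ_pi fun _ => isCompact_Icc
  obtain ⟨C, hC, hbound⟩ := hK.exists_pos_bound_norm_iteratedFDeriv hsmooth le_rfl
  refine ⟨C, hC, fun i j k ρ hρ => ?_⟩
  have hunit : ‖(![Pi.single j 1, Pi.single k 1] : Fin 2 → Fin n → ℝ)‖ ≤ 1 := by
    refine pi_norm_le_iff_of_nonneg zero_le_one |>.mpr fun l => ?_
    fin_cases l <;> simp [Pi.norm_single]
  simpa using (iteratedFDeriv ℝ 2 (fun ρ' => emF n ρs ρ' i) ρ).le_mul_prod_of_opNorm_le_of_le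
    (hbound i ρ fun l _ => hρ l) (b := fun _ => 1) fun l => (norm_le_pi_norm _ l).trans hunit

/-- `F` is differentiable at `0` with first partial derivatives
`∂F_i/∂ρ_j(0) = 1` if `i = j` and `ρ*_i ρ*_j` otherwise, and its second partial
derivatives are uniformly bounded on `[0,1/2]^n`. -/
theorem emF_derivatives_at_zero (n : ℕ) (hn : 2 ≤ n) (ρs : Fin n → ℝ)
    (hρs : ∀ i, ρs i ∈ Set.Ioo (0 : ℝ) 1) :
    (∀ i : Fin n, DifferentiableAt ℝ (fun ρ => emF n ρs ρ i) (0 : Fin n → ℝ)) ∧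
    (∀ i j : Fin n,
      fderiv ℝ (fun ρ => emF n ρs ρ i) (0 : Fin n → ℝ) (Pi.single j 1)
        = if i = j then 1 else ρs i * ρs j) ∧
    (∃ C > (0 : ℝ), ∀ (i j k : Fin n) (ρ : Fin n → ℝ),
      (∀ l, ρ l ∈ Set.Icc (0 : ℝ) (1 / 2)) →
      |iteratedFDeriv ℝ 2 (fun ρ' => emF n ρs ρ' i) ρ ![Pi.single j 1, Pi.single k 1]|
        ≤ C) :=
  emF_derivatives_at_zero_general n ρs hρs
end

section
/- Fix n ≥ 2 and ρ* ∈ (0,1)^n. There exists c > 0 such that for every ρ ∈ [0,1)^n with max_i ρ_i ≤ c, one has Σ_{i=1}^n F_i(ρ) ≥ Σ_{i=1}^n ρ_i. -/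
set_option maxHeartbeats 1000000


open Finset

/-- Near the origin the population EM update does not decrease the sum of
coordinates: there is `c > 0` such that `max_i ρ_i ≤ c` implies
`∑_i F_i(ρ) ≥ ∑_i ρ_i`. -/
theorem em_repels_from_zero (n : ℕ) (hn : 2 ≤ n) (ρs : Fin n → ℝ)
    (hρs : ∀ i, ρs i ∈ Set.Ioo (0 : ℝ) 1) :
    ∃ c > (0 : ℝ), ∀ ρ : Fin n → ℝ, (∀ i, ρ i ∈ Set.Ico (0 : ℝ) 1) →
      (∀ i, ρ i ≤ c) → ∑ i, ρ i ≤ ∑ i, emF n ρs ρ i := by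
  have hn0 : 0 < n := by omega
  have hne : (Finset.univ : Finset (Fin n)).Nonempty := ⟨⟨0, hn0⟩, mem_univ _⟩
  set m := Finset.univ.inf' hne ρs with hmdef
  have hm_le : ∀ i, m ≤ ρs i := fun i => inf'_le _ (mem_univ i)
  have hm_pos : 0 < m := by
    obtain ⟨i, -, hi⟩ := exists_mem_eq_inf' hne ρs
    rw [hmdef, hi]; exact (hρs i).1
  clear_value m
  have hm_lt1 : m < 1 := lt_of_le_of_lt (hm_le ⟨0, hn0⟩) (hρs _).2
  have hnR : (2:ℝ) ≤ (n:ℝ) := by exact_mod_cast hn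
  have hsn1 : (1:ℝ) ≤ Real.sqrt n := by
    rw [show (1:ℝ) = Real.sqrt 1 by simp]
    exact Real.sqrt_le_sqrt (by linarith)
  have hsn0 : (0:ℝ) < Real.sqrt n := by linarith
  refine ⟨m / (4 * Real.sqrt n), by positivity, ?_⟩
  intro ρ hρ hρc
  set c := m / (4 * Real.sqrt n) with hcdef
  have hc0 : 0 < c := by positivity
  have hc2 : c ^ 2 = m ^ 2 / (16 * n) := by
    rw [hcdef, div_pow, mul_pow, Real.sq_sqrt (by linarith : (0:ℝ) ≤ (n:ℝ))]
    norm_num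
  have hc14 : c ≤ 1/4 := by
    rw [hcdef, div_le_iff₀ (by positivity)]
    nlinarith
  clear_value c
  have hρ0 : ∀ j, 0 ≤ ρ j := fun j => (hρ j).1
  have hρc' : ∀ j, ρ j ≤ 1/4 := fun j => le_trans (hρc j) hc14
  have hsq : ∀ j, ρ j ^ 2 ≤ 1/16 := by
    intro j; nlinarith [hρ0 j, hρc' j]
  have h1ρ : ∀ j, (15:ℝ)/16 ≤ 1 - ρ j ^ 2 := fun j => by nlinarith [hsq j]
  have hρc2 : ∀ j, ρ j ^ 2 ≤ c ^ 2 := by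
    intro j; nlinarith [hρ0 j, hρc j]
  -- bounds on the common denominator D
  set D := 1 + ∑ k, ρ k ^ 2 / (1 - ρ k ^ 2) with hDdef
  have hD1 : 1 ≤ D := by
    have : 0 ≤ ∑ k, ρ k ^ 2 / (1 - ρ k ^ 2) :=
      Finset.sum_nonneg fun k _ => div_nonneg (sq_nonneg _) (by nlinarith [h1ρ k])
    rw [hDdef]; linarith
  have hD2 : D ≤ 2 := by
    have hterm : ∀ k ∈ (Finset.univ : Finset (Fin n)),
        ρ k ^ 2 / (1 - ρ k ^ 2) ≤ 2 * c ^ 2 := by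
      intro k _
      rw [div_le_iff₀ (by nlinarith [h1ρ k])]
      nlinarith [h1ρ k, hρc2 k, sq_nonneg c]
    have hsum := Finset.sum_le_card_nsmul Finset.univ _ _ hterm
    rw [Finset.card_univ, Fintype.card_fin, nsmul_eq_mul] at hsum
    have hnc : (n:ℝ) * (2 * c ^ 2) ≤ 1/8 := by
      rw [hc2]
      rw [show (n:ℝ) * (2 * (m^2/(16*n))) = m^2/8 by field_simp; ring]
      nlinarith
    rw [hDdef]; linarith
  have hDpos : 0 < D := by linarith
  clear_value D
  -- bounds on lam
  have hlam_eq : ∀ j, lam n ρ j = ρ j / ((1 - ρ j ^ 2) * D) := by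
    intro j
    simp only [lam]
    rw [← hDdef, div_div]
  have hXpos : ∀ j, 0 < (1 - ρ j ^ 2) * D := by
    intro j; have := h1ρ j; positivity
  have hX2 : ∀ j, (1 - ρ j ^ 2) * D ≤ 2 := by
    intro j
    have h1 : 1 - ρ j ^ 2 ≤ 1 := by nlinarith [sq_nonneg (ρ j)]
    have h2 : (1 - ρ j ^ 2) * D ≤ 1 * D :=
      mul_le_mul_of_nonneg_right h1 hDpos.le
    linarith
  have hX12 : ∀ j, (1:ℝ)/2 ≤ (1 - ρ j ^ 2) * D := by
    intro j
    have h1 : (15:ℝ)/16 * 1 ≤ (1 - ρ j ^ 2) * D :=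
      mul_le_mul (h1ρ j) hD1 (by norm_num) (by linarith [h1ρ j])
    linarith
  have hlam_lb : ∀ j, ρ j / 2 ≤ lam n ρ j := by
    intro j
    rw [hlam_eq j, div_le_div_iff₀ (by norm_num) (hXpos j)]
    exact mul_le_mul_of_nonneg_left (hX2 j) (hρ0 j)
  have hlam_ub : ∀ j, lam n ρ j ≤ 2 * ρ j := by
    intro j
    rw [hlam_eq j, div_le_iff₀ (hXpos j)]
    have h := mul_le_mul_of_nonneg_left (hX12 j)
      (by linarith [hρ0 j] : (0:ℝ) ≤ 2 * ρ j)
    linarith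
  have hlam_nn : ∀ j, 0 ≤ lam n ρ j := by
    intro j; have := hlam_lb j; have := hρ0 j; linarith
  -- bounds on the differences Δ_{jk}
  have hΔ_lb : ∀ j k, m ^ 2 / 2 ≤ ρs j * ρs k - ρ j * ρ k := by
    intro j k
    have h1 : m ^ 2 ≤ ρs j * ρs k := by nlinarith [hm_le j, hm_le k, hm_pos]
    have h2 : ρ j * ρ k ≤ c ^ 2 := by nlinarith [hρ0 j, hρ0 k, hρc j, hρc k, hc0]
    have h3 : c ^ 2 ≤ m ^ 2 / 2 := by
      rw [hc2, div_le_div_iff₀ (by positivity) (by norm_num)]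
      nlinarith [sq_nonneg m]
    linarith
  have hΔ_nn : ∀ j k, 0 ≤ ρs j * ρs k - ρ j * ρ k := by
    intro j k; have := hΔ_lb j k; nlinarith [sq_nonneg m, hm_pos]
  have hΔ_ub : ∀ j k, ρs j * ρs k - ρ j * ρ k ≤ 1 := by
    intro j k
    nlinarith [(hρs j).1, (hρs j).2, (hρs k).1, (hρs k).2,
      mul_nonneg (hρ0 j) (hρ0 k)]
  -- sum bounds
  set Sρ := ∑ j, ρ j with hSρdef
  clear_value Sρ
  have hSρ_nn : 0 ≤ Sρ := by
    rw [hSρdef]; exact Finset.sum_nonneg fun j _ => hρ0 j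
  have hSρ_ub : Sρ ≤ (n:ℝ) * c := by
    have := Finset.sum_le_card_nsmul Finset.univ ρ c (fun j _ => hρc j)
    rw [Finset.card_univ, Fintype.card_fin, nsmul_eq_mul] at this
    rw [hSρdef]; exact this
  -- the key per-coordinate inequality
  have key : ∀ i, ρ i ≤ emF n ρs ρ i := by
    intro i
    set S := ∑ j ∈ Finset.univ.erase i, (ρs i * ρs j - ρ i * ρ j) * lam n ρ j
      with hSdef
    clear_value S
    set T := ∑ j, ∑ k ∈ Finset.univ.erase j,
      (ρs j * ρs k - ρ j * ρ k) * lam n ρ j * lam n ρ k with hTdef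
    clear_value T
    set P := ∑ j ∈ Finset.univ.erase i, ρ j with hPdef
    clear_value P
    have hP_eq : P = Sρ - ρ i := by
      rw [hPdef, hSρdef]
      exact Finset.sum_erase_eq_sub (mem_univ i)
    have hP_nn : 0 ≤ P := by
      rw [hPdef]; exact Finset.sum_nonneg fun j _ => hρ0 j
    have hS_nn : 0 ≤ S := by
      rw [hSdef]
      exact Finset.sum_nonneg fun j _ => mul_nonneg (hΔ_nn i j) (hlam_nn j)
    have hS_lb : m ^ 2 / 4 * P ≤ S := by
      rw [hPdef, hSdef, Finset.mul_sum]
      refine Finset.sum_le_sum fun j _ => ?_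
      have h := mul_le_mul (hΔ_lb i j) (hlam_lb j)
        (by linarith [hρ0 j]) (le_trans (by positivity) (hΔ_lb i j))
      nlinarith [h]
    have hT_nn : 0 ≤ T := by
      rw [hTdef]
      refine Finset.sum_nonneg fun j _ => Finset.sum_nonneg fun k _ => ?_
      exact mul_nonneg (mul_nonneg (hΔ_nn j k) (hlam_nn j)) (hlam_nn k)
    -- T ≤ 4 * ∑_j ρ_j (Sρ - ρ_j)
    have hT4 : T ≤ 4 * ∑ j, ρ j * (Sρ - ρ j) := by
      rw [hTdef, Finset.mul_sum]
      refine Finset.sum_le_sum fun j _ => ?_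
      have hinner : ∑ k ∈ Finset.univ.erase j,
          (ρs j * ρs k - ρ j * ρ k) * lam n ρ j * lam n ρ k
            ≤ ∑ k ∈ Finset.univ.erase j, 4 * (ρ j * ρ k) := by
        refine Finset.sum_le_sum fun k _ => ?_
        have h1 : (ρs j * ρs k - ρ j * ρ k) * lam n ρ j ≤ 1 * (2 * ρ j) :=
          mul_le_mul (hΔ_ub j k) (hlam_ub j) (hlam_nn j) (by norm_num)
        have h2 : (ρs j * ρs k - ρ j * ρ k) * lam n ρ j * lam n ρ k
            ≤ (1 * (2 * ρ j)) * (2 * ρ k) :=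
          mul_le_mul h1 (hlam_ub k) (hlam_nn k)
            (by linarith [hρ0 j])
        nlinarith [h2]
      have herase : ∑ k ∈ Finset.univ.erase j, 4 * (ρ j * ρ k)
          = 4 * (ρ j * (Sρ - ρ j)) := by
        rw [show (fun k => 4 * (ρ j * ρ k)) = (fun k => (4 * ρ j) * ρ k) from
          funext fun k => by ring]
        rw [← Finset.mul_sum, Finset.sum_erase_eq_sub (mem_univ j), ← hSρdef]
        ring
      calc ∑ k ∈ Finset.univ.erase j,
          (ρs j * ρs k - ρ j * ρ k) * lam n ρ j * lam n ρ k
          ≤ ∑ k ∈ Finset.univ.erase j, 4 * (ρ j * ρ k) := hinner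
        _ = 4 * (ρ j * (Sρ - ρ j)) := herase
    have hquad : ∑ j, ρ j * (Sρ - ρ j) ≤ 2 * Sρ * P := by
      have h1 : ∑ j, ρ j * (Sρ - ρ j) = Sρ * Sρ - ∑ j, ρ j ^ 2 := by
        rw [show (fun j => ρ j * (Sρ - ρ j)) = (fun j => ρ j * Sρ - ρ j ^ 2)
          from funext fun j => by ring]
        rw [Finset.sum_sub_distrib, ← Finset.sum_mul, ← hSρdef]
      have h2 : ρ i ^ 2 ≤ ∑ j, ρ j ^ 2 :=
        Finset.single_le_sum (f := fun j => ρ j ^ 2)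
          (fun j _ => sq_nonneg _) (mem_univ i)
      rw [h1, hP_eq]
      nlinarith [sq_nonneg (Sρ - ρ i)]
    have hT8 : T ≤ 8 * Sρ * P := by
      calc T ≤ 4 * ∑ j, ρ j * (Sρ - ρ j) := hT4
        _ ≤ 4 * (2 * Sρ * P) := by linarith [hquad]
        _ = 8 * Sρ * P := by ring
    have h8 : 8 * (n:ℝ) * c ^ 2 = m ^ 2 / 2 := by
      rw [hc2]; field_simp; ring
    have hkey : ρ i * T ≤ 2 * S := by
      have s1 : ρ i * T ≤ c * T :=
        mul_le_mul_of_nonneg_right (hρc i) hT_nn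
      have s2 : c * T ≤ c * (8 * Sρ * P) :=
        mul_le_mul_of_nonneg_left hT8 hc0.le
      have s3 : c * (8 * Sρ * P) ≤ c * (8 * ((n:ℝ) * c) * P) := by
        have : 8 * Sρ * P ≤ 8 * ((n:ℝ) * c) * P := by nlinarith [hP_nn, hSρ_ub]
        exact mul_le_mul_of_nonneg_left this hc0.le
      have s4 : c * (8 * ((n:ℝ) * c) * P) = m ^ 2 / 2 * P := by
        rw [show c * (8 * ((n:ℝ) * c) * P) = (8 * (n:ℝ) * c ^ 2) * P by ring, h8]
      have s5 : m ^ 2 / 2 * P ≤ 2 * S := by linarith [hS_lb]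
      linarith
    have hT1 : (0:ℝ) < 1 + T := by linarith
    have hsqT : 0 < Real.sqrt (1 + T) := Real.sqrt_pos.2 hT1
    have hsq_le : ρ i * Real.sqrt (1 + T) ≤ ρ i + S := by
      have h1 : ρ i * Real.sqrt (1 + T) = Real.sqrt (ρ i ^ 2 * (1 + T)) := by
        rw [Real.sqrt_mul (sq_nonneg _), Real.sqrt_sq (hρ0 i)]
      rw [h1]
      have h2 : ρ i ^ 2 * (1 + T) ≤ (ρ i + S) ^ 2 := by
        nlinarith [sq_nonneg S, mul_le_mul_of_nonneg_left hkey (hρ0 i)]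
      calc Real.sqrt (ρ i ^ 2 * (1 + T)) ≤ Real.sqrt ((ρ i + S) ^ 2) :=
            Real.sqrt_le_sqrt h2
        _ = ρ i + S := Real.sqrt_sq (by linarith [hρ0 i, hS_nn])
    unfold emF
    rw [← hSdef, ← hTdef, le_div_iff₀ hsqT]
    linarith [hsq_le]
  rw [hSρdef]
  exact Finset.sum_le_sum fun i _ => key i
end

section
/- Fix n ≥ 2 and ρ* ∈ (0,1)^n. Let ρ⁰ ∈ [0,1)^n with ρ⁰ ≠ 0, and define the EM iterates by ρ^{t+1} = F(ρ^t). Then the sequence (ρ^t)_{t≥0} does not converge to the zero vector. -/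
open Finset Filter

namespace EMAux

noncomputable def S {n : ℕ} (ρ : Fin n → ℝ) : ℝ := ∑ k, ρ k ^ 2 / (1 - ρ k ^ 2)

noncomputable def EE {n : ℕ} (a ρ : Fin n → ℝ) : ℝ :=
  1 + ∑ j, ∑ k ∈ Finset.univ.erase j, (a j * a k - ρ j * ρ k) * lam n ρ j * lam n ρ k

variable {n : ℕ} {a ρ : Fin n → ℝ}

lemma S_nonneg (hρ : ∀ i, 0 ≤ ρ i ∧ ρ i < 1) : 0 ≤ S ρ :=
  Finset.sum_nonneg fun k _ => div_nonneg (sq_nonneg _)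
    (by nlinarith [(hρ k).1, (hρ k).2])

lemma P_pos (hρ : ∀ i, 0 ≤ ρ i ∧ ρ i < 1) : 0 < 1 + S ρ := by
  linarith [S_nonneg hρ]

lemma lam_def (j : Fin n) : lam n ρ j = (ρ j / (1 - ρ j ^ 2)) / (1 + S ρ) := rfl

lemma lam_eq (hρ : ∀ i, 0 ≤ ρ i ∧ ρ i < 1) (j : Fin n) :
    lam n ρ j * ((1 - ρ j ^ 2) * (1 + S ρ)) = ρ j := by
  have h1 : (0:ℝ) < 1 - ρ j ^ 2 := by nlinarith [(hρ j).1, (hρ j).2]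
  have h2 : (0:ℝ) < 1 + S ρ := P_pos hρ
  rw [lam_def, div_div, div_mul_cancel₀]
  positivity

lemma lam_nonneg (hρ : ∀ i, 0 ≤ ρ i ∧ ρ i < 1) (j : Fin n) : 0 ≤ lam n ρ j := by
  have h1 : (0:ℝ) < 1 - ρ j ^ 2 := by nlinarith [(hρ j).1, (hρ j).2]
  exact div_nonneg (div_nonneg (hρ j).1 h1.le) (P_pos hρ).le

lemma lam_pos (hρ : ∀ i, 0 ≤ ρ i ∧ ρ i < 1) {j : Fin n} (hj : 0 < ρ j) :
    0 < lam n ρ j := by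
  have h1 : (0:ℝ) < 1 - ρ j ^ 2 := by nlinarith [(hρ j).1, (hρ j).2]
  exact div_pos (div_pos hj h1) (P_pos hρ)

lemma R_mul (hρ : ∀ i, 0 ≤ ρ i ∧ ρ i < 1) :
    (∑ j, ρ j * lam n ρ j) * (1 + S ρ) = S ρ := by
  have hS : S ρ = ∑ j, ρ j ^ 2 / (1 - ρ j ^ 2) := rfl
  rw [Finset.sum_mul]
  conv_rhs => rw [hS]
  refine Finset.sum_congr rfl fun j _ => ?_
  have h1 : (0:ℝ) < 1 - ρ j ^ 2 := by nlinarith [(hρ j).1, (hρ j).2]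
  rw [eq_div_iff h1.ne']
  linear_combination ρ j * lam_eq hρ j

lemma W_mul (hρ : ∀ i, 0 ≤ ρ i ∧ ρ i < 1) :
    (∑ j, (lam n ρ j) ^ 2 * (1 - ρ j ^ 2)) * (1 + S ρ) = ∑ j, ρ j * lam n ρ j := by
  rw [Finset.sum_mul]
  refine Finset.sum_congr rfl fun j _ => ?_
  linear_combination lam n ρ j * lam_eq hρ j

lemma num_eq (hρ : ∀ i, 0 ≤ ρ i ∧ ρ i < 1) (i : Fin n) :
    ρ i + ∑ j ∈ Finset.univ.erase i, (a i * a j - ρ i * ρ j) * lam n ρ j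
      = a i * (∑ j, a j * lam n ρ j) + lam n ρ i * (1 - a i ^ 2) := by
  have hP := P_pos hρ
  rw [Finset.sum_erase_eq_sub (Finset.mem_univ i)]
  have hsplit : ∑ j, (a i * a j - ρ i * ρ j) * lam n ρ j
      = a i * (∑ j, a j * lam n ρ j) - ρ i * (∑ j, ρ j * lam n ρ j) := by
    rw [Finset.mul_sum, Finset.mul_sum, ← Finset.sum_sub_distrib]
    exact Finset.sum_congr rfl fun j _ => by ring
  rw [hsplit]
  have key : (ρ i - ρ i * (∑ j, ρ j * lam n ρ j)
        - (a i * a i - ρ i * ρ i) * lam n ρ i - lam n ρ i * (1 - a i ^ 2)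
        + (a i * a i - ρ i * ρ i) * lam n ρ i)
        * (1 + S ρ) = (a i * a i - ρ i * ρ i) * lam n ρ i * (1 + S ρ) := by
    linear_combination (-(ρ i)) * R_mul hρ - lam_eq hρ i
  have key2 : ρ i - ρ i * (∑ j, ρ j * lam n ρ j)
        - (a i * a i - ρ i * ρ i) * lam n ρ i - lam n ρ i * (1 - a i ^ 2) = 0 := by
    have := mul_right_cancel₀ hP.ne' key
    linarith
  linarith [key2]

lemma den_eq (hρ : ∀ i, 0 ≤ ρ i ∧ ρ i < 1) :
    EE a ρ * (1 + S ρ)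
      = ((∑ j, a j * lam n ρ j) ^ 2 + ∑ j, (lam n ρ j) ^ 2 * (1 - a j ^ 2)) * (1 + S ρ) + 1 := by
  rw [EE]
  have h1 : ∀ j : Fin n, ∑ k ∈ Finset.univ.erase j,
      (a j * a k - ρ j * ρ k) * lam n ρ j * lam n ρ k
      = a j * lam n ρ j * (∑ k, a k * lam n ρ k)
        - ρ j * lam n ρ j * (∑ k, ρ k * lam n ρ k)
        - (a j ^ 2 - ρ j ^ 2) * (lam n ρ j) ^ 2 := by
    intro j
    rw [Finset.sum_erase_eq_sub (Finset.mem_univ j), Finset.mul_sum, Finset.mul_sum,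
      ← Finset.sum_sub_distrib]
    rw [show (∑ k, ((a j * a k - ρ j * ρ k) * lam n ρ j * lam n ρ k))
      = ∑ k, (a j * lam n ρ j * (a k * lam n ρ k) - ρ j * lam n ρ j * (ρ k * lam n ρ k)) from
      Finset.sum_congr rfl fun k _ => by ring]
    ring
  rw [Finset.sum_congr rfl fun j _ => h1 j]
  rw [Finset.sum_sub_distrib, Finset.sum_sub_distrib, ← Finset.sum_mul, ← Finset.sum_mul]
  have h2 : ∑ j, (a j ^ 2 - ρ j ^ 2) * (lam n ρ j) ^ 2
      = (∑ j, (lam n ρ j) ^ 2 * (1 - ρ j ^ 2)) - ∑ j, (lam n ρ j) ^ 2 * (1 - a j ^ 2) := by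
    rw [← Finset.sum_sub_distrib]
    exact Finset.sum_congr rfl fun j _ => by ring
  rw [h2]
  linear_combination (-(1 + ∑ j, ρ j * lam n ρ j)) * R_mul hρ - W_mul hρ

lemma T_nonneg (ha : ∀ i, 0 < a i ∧ a i < 1) (hρ : ∀ i, 0 ≤ ρ i ∧ ρ i < 1) :
    0 ≤ ∑ j, a j * lam n ρ j :=
  Finset.sum_nonneg fun j _ => mul_nonneg (ha j).1.le (lam_nonneg hρ j)

lemma Q_nonneg (ha : ∀ i, 0 < a i ∧ a i < 1) (hρ : ∀ i, 0 ≤ ρ i ∧ ρ i < 1) :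
    0 ≤ ∑ j, (lam n ρ j) ^ 2 * (1 - a j ^ 2) :=
  Finset.sum_nonneg fun j _ => mul_nonneg (sq_nonneg _)
    (by nlinarith [(ha j).1, (ha j).2])

lemma E_gt (ha : ∀ i, 0 < a i ∧ a i < 1) (hρ : ∀ i, 0 ≤ ρ i ∧ ρ i < 1) :
    (∑ j, a j * lam n ρ j) ^ 2 + (∑ j, (lam n ρ j) ^ 2 * (1 - a j ^ 2)) < EE a ρ := by
  have hP := P_pos hρ
  have h := den_eq (a := a) hρ
  nlinarith [h, hP]

lemma E_pos (ha : ∀ i, 0 < a i ∧ a i < 1) (hρ : ∀ i, 0 ≤ ρ i ∧ ρ i < 1) :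
    0 < EE a ρ := by
  have := E_gt ha hρ
  nlinarith [sq_nonneg (∑ j, a j * lam n ρ j), Q_nonneg ha hρ]

lemma emF_eq (hρ : ∀ i, 0 ≤ ρ i ∧ ρ i < 1) (i : Fin n) :
    emF n a ρ i = (a i * (∑ j, a j * lam n ρ j) + lam n ρ i * (1 - a i ^ 2))
      / Real.sqrt (EE a ρ) := by
  rw [emF, ← num_eq hρ i]
  rfl

lemma emF_bounds (ha : ∀ i, 0 < a i ∧ a i < 1) (hρ : ∀ i, 0 ≤ ρ i ∧ ρ i < 1)
    (hex : ∃ k, 0 < ρ k) (i : Fin n) :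
    0 < emF n a ρ i ∧ emF n a ρ i < 1 := by
  obtain ⟨k, hk⟩ := hex
  set T := ∑ j, a j * lam n ρ j with hTdef
  set Q := ∑ j, (lam n ρ j) ^ 2 * (1 - a j ^ 2) with hQdef
  have hTpos : 0 < T := by
    refine Finset.sum_pos' (fun j _ => mul_nonneg (ha j).1.le (lam_nonneg hρ j))
      ⟨k, Finset.mem_univ k, mul_pos (ha k).1 (lam_pos hρ hk)⟩
  have hQ0 : 0 ≤ Q := Q_nonneg ha hρ
  have hEgt : T ^ 2 + Q < EE a ρ := E_gt ha hρ
  have hEpos : 0 < EE a ρ := E_pos ha hρ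
  have hsE : 0 < Real.sqrt (EE a ρ) := Real.sqrt_pos.mpr hEpos
  have hci : (0:ℝ) < 1 - a i ^ 2 := by nlinarith [(ha i).1, (ha i).2]
  have hN0 : 0 < a i * T + lam n ρ i * (1 - a i ^ 2) := by
    have := lam_nonneg hρ i
    have := mul_pos (ha i).1 hTpos
    nlinarith
  rw [emF_eq hρ i]
  constructor
  · exact div_pos hN0 hsE
  · rw [div_lt_one hsE]
    have hsq : (a i * T + lam n ρ i * (1 - a i ^ 2)) ^ 2 < EE a ρ := by
      have h1 : (a i * T + lam n ρ i * (1 - a i ^ 2)) ^ 2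
          ≤ T ^ 2 + (lam n ρ i) ^ 2 * (1 - a i ^ 2) := by
        nlinarith [mul_nonneg hci.le (sq_nonneg (T - a i * lam n ρ i))]
      have h2 : (lam n ρ i) ^ 2 * (1 - a i ^ 2) ≤ Q := by
        refine Finset.single_le_sum (f := fun j => (lam n ρ j) ^ 2 * (1 - a j ^ 2))
          (fun j _ => mul_nonneg (sq_nonneg _) (by nlinarith [(ha j).1, (ha j).2]))
          (Finset.mem_univ i)
      linarith
    exact (Real.lt_sqrt hN0.le).mpr hsq

lemma L_le (ha : ∀ i, 0 < a i ∧ a i < 1) (hρ : ∀ i, 0 ≤ ρ i ∧ ρ i < 1) :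
    ∑ i, a i * ρ i ≤ (1 + S ρ) * ∑ j, a j * lam n ρ j := by
  rw [Finset.mul_sum]
  refine Finset.sum_le_sum fun i _ => ?_
  have h := lam_eq hρ i
  have h1 : 0 ≤ lam n ρ i := lam_nonneg hρ i
  have hP := P_pos hρ
  have h2 : 0 ≤ ρ i ^ 2 := sq_nonneg _
  have h3 : ρ i ≤ lam n ρ i * (1 + S ρ) := by
    nlinarith [mul_nonneg (mul_nonneg h1 hP.le) h2]
  nlinarith [mul_le_mul_of_nonneg_left h3 (ha i).1.le]

lemma sumN_ge (ha : ∀ i, 0 < a i ∧ a i < 1) (hρ : ∀ i, 0 ≤ ρ i ∧ ρ i < 1)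
    {δ γ : ℝ} (hγ : ∀ i, γ ≤ 1 - a i ^ 2) (hsuma : 1 + δ ≤ γ + ∑ i, a i ^ 2) :
    (1 + δ) * (∑ j, a j * lam n ρ j)
      ≤ ∑ i, a i * (a i * (∑ j, a j * lam n ρ j) + lam n ρ i * (1 - a i ^ 2)) := by
  set T := ∑ j, a j * lam n ρ j with hTdef
  have hT0 : 0 ≤ T := T_nonneg ha hρ
  have h1 : ∑ i, a i * (a i * T + lam n ρ i * (1 - a i ^ 2))
      = (∑ i, a i ^ 2) * T + ∑ i, (a i * lam n ρ i) * (1 - a i ^ 2) := by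
    rw [Finset.sum_mul, ← Finset.sum_add_distrib]
    exact Finset.sum_congr rfl fun i _ => by ring
  rw [h1]
  have h2 : γ * T ≤ ∑ i, (a i * lam n ρ i) * (1 - a i ^ 2) := by
    rw [show γ * T = ∑ i, γ * (a i * lam n ρ i) from by rw [Finset.mul_sum]]
    refine Finset.sum_le_sum fun i _ => ?_
    have := mul_nonneg (ha i).1.le (lam_nonneg hρ i)
    calc γ * (a i * lam n ρ i) ≤ (1 - a i ^ 2) * (a i * lam n ρ i) :=
          mul_le_mul_of_nonneg_right (hγ i) this
      _ = (a i * lam n ρ i) * (1 - a i ^ 2) := by ring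
  nlinarith [mul_le_mul_of_nonneg_right hsuma hT0]

lemma step (ha : ∀ i, 0 < a i ∧ a i < 1) (hρ : ∀ i, 0 ≤ ρ i ∧ ρ i < 1)
    {δ γ : ℝ} (hδ0 : 0 ≤ δ) (hγ : ∀ i, γ ≤ 1 - a i ^ 2)
    (hsuma : 1 + δ ≤ γ + ∑ i, a i ^ 2)
    (hball : (1 + S ρ) * Real.sqrt (EE a ρ) ≤ 1 + δ) :
    ∑ i, a i * ρ i ≤ ∑ i, a i * emF n a ρ i := by
  set T := ∑ j, a j * lam n ρ j with hTdef
  have hT0 : 0 ≤ T := T_nonneg ha hρ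
  have hEpos : 0 < EE a ρ := E_pos ha hρ
  have hsE : 0 < Real.sqrt (EE a ρ) := Real.sqrt_pos.mpr hEpos
  have hP := P_pos hρ
  have hL : ∑ i, a i * emF n a ρ i
      = (∑ i, a i * (a i * T + lam n ρ i * (1 - a i ^ 2))) / Real.sqrt (EE a ρ) := by
    rw [Finset.sum_div]
    exact Finset.sum_congr rfl fun i _ => by rw [emF_eq hρ i, mul_div_assoc]
  rw [hL]
  have h1 : (1 + δ) * T / Real.sqrt (EE a ρ)
      ≤ (∑ i, a i * (a i * T + lam n ρ i * (1 - a i ^ 2))) / Real.sqrt (EE a ρ) :=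
    (div_le_div_iff_of_pos_right hsE).mpr (sumN_ge ha hρ hγ hsuma)
  have h2 : (1 + S ρ) * T ≤ (1 + δ) * T / Real.sqrt (EE a ρ) := by
    rw [le_div_iff₀ hsE]
    nlinarith [mul_le_mul_of_nonneg_right hball hT0]
  linarith [L_le ha hρ]

set_option maxHeartbeats 1000000 in
lemma ball_bound (ha : ∀ i, 0 < a i ∧ a i < 1) (hρ : ∀ i, 0 ≤ ρ i ∧ ρ i < 1)
    {ε δ : ℝ} (hε0 : 0 ≤ ε) (hε4 : ε ≤ 1/4) (hεδ : 34 * n ^ 2 * ε ^ 2 ≤ δ)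
    (hδ1 : δ ≤ 1) (hn : 1 ≤ n) (hsmall : ∀ i, ρ i ≤ ε) :
    (1 + S ρ) * Real.sqrt (EE a ρ) ≤ 1 + δ := by
  have hn' : (1:ℝ) ≤ n := by exact_mod_cast hn
  have hδ0 : 0 ≤ δ := le_trans (by positivity) hεδ
  have hP := P_pos hρ
  set T := ∑ j, a j * lam n ρ j with hTdef
  set Q := ∑ j, (lam n ρ j) ^ 2 * (1 - a j ^ 2) with hQdef
  have hS2 : S ρ ≤ 2 * n * ε ^ 2 := by
    have hterm : ∀ k ∈ Finset.univ, ρ k ^ 2 / (1 - ρ k ^ 2) ≤ 2 * ε ^ 2 := by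
      intro k _
      have h0 := (hρ k).1
      have h1 := hsmall k
      have hd : (0:ℝ) < 1 - ρ k ^ 2 := by nlinarith [(hρ k).2]
      rw [div_le_iff₀ hd]
      have hρ14 : ρ k ≤ 1/4 := le_trans h1 hε4
      nlinarith [mul_le_mul h1 h1 h0 hε0, mul_le_mul hρ14 hρ14 h0 (by norm_num : (0:ℝ) ≤ 1/4)]
    have hSdef : S ρ = ∑ k, ρ k ^ 2 / (1 - ρ k ^ 2) := rfl
    rw [hSdef]
    calc ∑ k, ρ k ^ 2 / (1 - ρ k ^ 2) ≤ Finset.univ.card • (2 * ε ^ 2) :=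
          Finset.sum_le_card_nsmul _ _ _ hterm
      _ = 2 * n * ε ^ 2 := by simp [Finset.card_univ, nsmul_eq_mul]; ring
  have hlam : ∀ j, lam n ρ j ≤ 2 * ε := by
    intro j
    have h0 := (hρ j).1
    have h1 := hsmall j
    have hd : (0:ℝ) < 1 - ρ j ^ 2 := by nlinarith [(hρ j).2]
    have h2 : ρ j / (1 - ρ j ^ 2) ≤ 2 * ε := by
      rw [div_le_iff₀ hd]
      nlinarith [mul_nonneg hε0 (sq_nonneg (ρ j))]
    calc lam n ρ j ≤ ρ j / (1 - ρ j ^ 2) := by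
          rw [lam_def]
          exact div_le_self (div_nonneg h0 hd.le) (by linarith [S_nonneg hρ])
      _ ≤ 2 * ε := h2
  have hT : T ≤ 2 * n * ε := by
    have hterm : ∀ j ∈ Finset.univ, a j * lam n ρ j ≤ 2 * ε := by
      intro j _
      have := lam_nonneg hρ j
      nlinarith [(ha j).1, (ha j).2, hlam j]
    calc T ≤ Finset.univ.card • (2 * ε) := Finset.sum_le_card_nsmul _ _ _ hterm
      _ = 2 * n * ε := by simp [Finset.card_univ, nsmul_eq_mul]; ring
  have hQ : Q ≤ 4 * n * ε ^ 2 := by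
    have hterm : ∀ j ∈ Finset.univ, (lam n ρ j) ^ 2 * (1 - a j ^ 2) ≤ 4 * ε ^ 2 := by
      intro j _
      have h1 := lam_nonneg hρ j
      have h2 := hlam j
      nlinarith [(ha j).1, (ha j).2, sq_nonneg (lam n ρ j)]
    calc Q ≤ Finset.univ.card • (4 * ε ^ 2) := Finset.sum_le_card_nsmul _ _ _ hterm
      _ = 4 * n * ε ^ 2 := by simp [Finset.card_univ, nsmul_eq_mul]; ring
  have hT0 : 0 ≤ T := T_nonneg ha hρ
  have hQ0 : 0 ≤ Q := Q_nonneg ha hρ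
  have hE := den_eq (a := a) hρ
  have hnn : (0:ℝ) ≤ 2 * n * (n - 1) * ε ^ 2 := by
    have : (0:ℝ) ≤ n - 1 := by linarith
    positivity
  have h2n : 2 * n * ε ^ 2 ≤ 34 * n ^ 2 * ε ^ 2 := by
    have h30 : (0:ℝ) ≤ 30 * (n:ℝ) ^ 2 * ε ^ 2 := by positivity
    have h2 : (0:ℝ) ≤ 2 * (n:ℝ) ^ 2 * ε ^ 2 := by positivity
    nlinarith [hnn]
  have hP2 : 1 + S ρ ≤ 2 := by linarith [hS2, h2n, hεδ, hδ1]
  have hT2 : T ^ 2 ≤ 4 * n ^ 2 * ε ^ 2 := by nlinarith [hT, hT0]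
  have hTQ : T ^ 2 + Q ≤ 8 * n ^ 2 * ε ^ 2 := by nlinarith [hT2, hQ, hnn]
  have hPsq : (1 + S ρ) ^ 2 ≤ 4 := by nlinarith [hP, hP2]
  have e1 : (1 + S ρ) ^ 2 * EE a ρ = (T ^ 2 + Q) * (1 + S ρ) ^ 2 + (1 + S ρ) := by
    linear_combination (1 + S ρ) * hE
  have b1 : (T ^ 2 + Q) * (1 + S ρ) ^ 2 ≤ 8 * n ^ 2 * ε ^ 2 * 4 :=
    mul_le_mul hTQ hPsq (sq_nonneg _) (by positivity)
  have key : (1 + S ρ) ^ 2 * EE a ρ ≤ (1 + δ) ^ 2 := by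
    rw [e1]
    nlinarith [b1, hS2, hεδ, hδ0, hnn, sq_nonneg δ, h2n]
  have hE0 : 0 ≤ EE a ρ := (E_pos ha hρ).le
  have hsq : ((1 + S ρ) * Real.sqrt (EE a ρ)) ^ 2 ≤ (1 + δ) ^ 2 := by
    rw [mul_pow, Real.sq_sqrt hE0]
    exact key
  exact le_of_pow_le_pow_left₀ two_ne_zero (by linarith) hsq

end EMAux

/-- Started at any nonzero point of `[0,1)^n`, the population EM iterates do not
converge to the zero vector. -/
theorem em_not_converge_to_zero (n : ℕ) (hn : 2 ≤ n) (ρs : Fin n → ℝ)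
    (hρs : ∀ i, ρs i ∈ Set.Ioo (0 : ℝ) 1)
    (ρ0 : Fin n → ℝ) (hρ0 : ∀ i, ρ0 i ∈ Set.Ico (0 : ℝ) 1) (hne : ρ0 ≠ 0) :
    ¬ Tendsto (fun t => (emF n ρs)^[t] ρ0) atTop (nhds (0 : Fin n → ℝ)) := by
  intro h
  have ha : ∀ i, 0 < ρs i ∧ ρs i < 1 := fun i => ⟨(hρs i).1, (hρs i).2⟩
  set seq : ℕ → Fin n → ℝ := fun t => (emF n ρs)^[t] ρ0 with hseq
  have hinv : ∀ t, (∀ i, 0 ≤ seq t i ∧ seq t i < 1) ∧ ∃ k, 0 < seq t k := by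
    intro t
    induction t with
    | zero =>
      refine ⟨fun i => ⟨(hρ0 i).1, (hρ0 i).2⟩, ?_⟩
      obtain ⟨k, hk⟩ := Function.ne_iff.mp hne
      exact ⟨k, lt_of_le_of_ne (hρ0 k).1 (Ne.symm hk)⟩
    | succ t ih =>
      have hstep : seq (t+1) = emF n ρs (seq t) := Function.iterate_succ_apply' _ _ _
      have hb := fun i => EMAux.emF_bounds ha ih.1 ih.2 i
      rw [hstep]
      exact ⟨fun i => ⟨(hb i).1.le, (hb i).2⟩, ⟨⟨0, by omega⟩, (hb _).1⟩⟩
  have hne0 : (Finset.univ : Finset (Fin n)).Nonempty := ⟨⟨0, by omega⟩, Finset.mem_univ _⟩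
  obtain ⟨i1, -, hi1⟩ := Finset.exists_min_image Finset.univ (fun i => ρs i ^ 2) hne0
  obtain ⟨i0, -, hi0⟩ := Finset.exists_max_image Finset.univ (fun i => ρs i ^ 2) hne0
  set δ := ρs i1 ^ 2 with hδdef
  set γ := 1 - ρs i0 ^ 2 with hγdef
  have hδ0 : 0 < δ := pow_pos (ha i1).1 2
  have hδ1 : δ ≤ 1 := by nlinarith [(ha i1).1, (ha i1).2]
  have hγ : ∀ i, γ ≤ 1 - ρs i ^ 2 := by
    intro i
    have := hi0 i (Finset.mem_univ i)
    rw [hγdef]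
    linarith
  have hsuma : 1 + δ ≤ γ + ∑ i, ρs i ^ 2 := by
    have : Nontrivial (Fin n) := Fin.nontrivial_iff_two_le.mpr hn
    obtain ⟨j, hj⟩ := exists_ne i0
    have hjmem : j ∈ Finset.univ.erase i0 := Finset.mem_erase.mpr ⟨hj, Finset.mem_univ j⟩
    have h1 : ρs j ^ 2 ≤ ∑ i ∈ Finset.univ.erase i0, ρs i ^ 2 :=
      Finset.single_le_sum (fun i _ => sq_nonneg (ρs i)) hjmem
    have h2 : ρs i0 ^ 2 + ∑ i ∈ Finset.univ.erase i0, ρs i ^ 2 = ∑ i, ρs i ^ 2 :=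
      Finset.add_sum_erase _ (fun i => ρs i ^ 2) (Finset.mem_univ i0)
    have h3 : δ ≤ ρs j ^ 2 := hi1 j (Finset.mem_univ j)
    rw [hγdef]
    linarith
  have hncast : (0:ℝ) < (n:ℝ) := by
    have : 0 < n := by omega
    exact_mod_cast this
  set ε := min (1/4) (Real.sqrt (δ / (34 * n ^ 2))) with hεdef
  have hεpos : 0 < ε :=
    lt_min (by norm_num) (Real.sqrt_pos.mpr (by positivity))
  have hε4 : ε ≤ 1/4 := min_le_left _ _
  have hεδ : 34 * n ^ 2 * ε ^ 2 ≤ δ := by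
    have h1 : ε ≤ Real.sqrt (δ / (34 * n ^ 2)) := min_le_right _ _
    have h2 : ε ^ 2 ≤ δ / (34 * n ^ 2) := by
      have h3 := pow_le_pow_left₀ hεpos.le h1 2
      rwa [Real.sq_sqrt (by positivity)] at h3
    have h4 : 34 * (n:ℝ) ^ 2 * (ε ^ 2) ≤ 34 * n ^ 2 * (δ / (34 * n ^ 2)) :=
      mul_le_mul_of_nonneg_left h2 (by positivity)
    have h5 : 34 * (n:ℝ) ^ 2 * (δ / (34 * n ^ 2)) = δ := by
      field_simp
    linarith
  have hco : ∀ i, Tendsto (fun t => seq t i) atTop (nhds 0) := by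
    intro i
    have := tendsto_pi_nhds.mp h i
    simpa using this
  have hev : ∀ᶠ t in atTop, ∀ i, seq t i < ε :=
    eventually_all.mpr fun i => (hco i).eventually_lt_const hεpos
  obtain ⟨t0, ht0⟩ := eventually_atTop.mp hev
  have hmono : ∀ t, t0 ≤ t → (∑ i, ρs i * seq t0 i) ≤ ∑ i, ρs i * seq t i := by
    intro t ht
    induction t, ht using Nat.le_induction with
    | base => exact le_refl _
    | succ t ht ih =>
      have hρt := (hinv t).1
      have hsmall : ∀ i, seq t i ≤ ε := fun i => (ht0 t ht i).le
      have hball := EMAux.ball_bound ha hρt hεpos.le hε4 hεδ hδ1 (by omega) hsmall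
      have hstep := EMAux.step ha hρt hδ0.le hγ hsuma hball
      have heq : seq (t+1) = emF n ρs (seq t) := Function.iterate_succ_apply' _ _ _
      rw [heq]
      exact le_trans ih hstep
  have hLpos : 0 < ∑ i, ρs i * seq t0 i := by
    obtain ⟨k, hk⟩ := (hinv t0).2
    exact Finset.sum_pos' (fun i _ => mul_nonneg (ha i).1.le ((hinv t0).1 i).1)
      ⟨k, Finset.mem_univ k, mul_pos (ha k).1 hk⟩
  have hLt : Tendsto (fun t => ∑ i, ρs i * seq t i) atTop (nhds 0) := by
    have h1 := tendsto_finset_sum (Finset.univ : Finset (Fin n))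
      (fun i _ => (hco i).const_mul (ρs i))
    simpa using h1
  have hevlt := hLt.eventually_lt_const hLpos
  obtain ⟨t, hlt, ht⟩ := (hevlt.and (eventually_ge_atTop t0)).exists
  exact absurd (hmono t ht) (not_le.mpr hlt)
end

section
/- Fix n ≥ 2 and let α, β ∈ (0,1). Let ρ ∈ [0,1)^n satisfy ρ_i ≤ α for all i ≠ 1 and ρ_1 > β. Then λ_1(ρ) > ρ_1 / (1 + 2n·(1 − ρ_1)/(1 − α)), and for every i ≠ 1, λ_i(ρ) ≤ 2(1 − ρ_1) / (β²·(1 − α)). -/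
open Finset

/-! With `w(x) = x²/(1 - x²)` and `D = 1 + ∑ₖ w(ρₖ)`, the identity `1 + w(x) = 1/(1 - x²)` gives
`(1 - ρ₁²) D = 1 + (1 - ρ₁²) ∑_{k ≠ 1} w(ρₖ)` and `D ≥ 1/(1 - ρ₁²)`. Both bounds then follow from
`w(ρₖ) ≤ ρₖ/(1 - ρₖ²) ≤ 1/(1 - α)` for `k ≠ 1` and `1 - ρ₁² ≤ 2(1 - ρ₁)`. -/

section RealInequalities

variable {x a : ℝ}

lemma one_add_sq_div_one_sub_sq (hx : 1 - x ^ 2 ≠ 0) :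
    1 + x ^ 2 / (1 - x ^ 2) = 1 / (1 - x ^ 2) := by
  field_simp
  ring

lemma div_one_sub_sq_le_one_div_one_sub (h0 : 0 ≤ x) (hxa : x ≤ a) (ha : a < 1) :
    x / (1 - x ^ 2) ≤ 1 / (1 - a) := by
  rw [div_le_div_iff₀ (by nlinarith) (by linarith)]
  nlinarith

lemma sq_div_one_sub_sq_le_div (h0 : 0 ≤ x) (h1 : x < 1) :
    x ^ 2 / (1 - x ^ 2) ≤ x / (1 - x ^ 2) :=
  div_le_div_of_nonneg_right (by nlinarith) (by nlinarith)

lemma one_sub_sq_le_two_mul_one_sub (x : ℝ) : 1 - x ^ 2 ≤ 2 * (1 - x) := by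
  nlinarith [sq_nonneg (1 - x)]

end RealInequalities

section Lam

variable {n : ℕ} {ρ : Fin n → ℝ}

lemma one_sub_sq_mul_denom (j : Fin n) (hj : 1 - ρ j ^ 2 ≠ 0) :
    (1 - ρ j ^ 2) * (1 + ∑ k, ρ k ^ 2 / (1 - ρ k ^ 2))
      = 1 + (1 - ρ j ^ 2) * ∑ k ∈ univ.erase j, ρ k ^ 2 / (1 - ρ k ^ 2) := by
  rw [← add_sum_erase _ _ (mem_univ j), ← add_assoc, one_add_sq_div_one_sub_sq hj, mul_add,
    mul_one_div_cancel hj]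

lemma lam_self_eq (j : Fin n) (hj : 1 - ρ j ^ 2 ≠ 0) :
    lam n ρ j = ρ j / (1 + (1 - ρ j ^ 2) * ∑ k ∈ univ.erase j, ρ k ^ 2 / (1 - ρ k ^ 2)) := by
  rw [lam, div_div, one_sub_sq_mul_denom j hj]

lemma sum_erase_sq_div_le {a : ℝ} (hρ : ∀ k, ρ k ∈ Set.Ico (0 : ℝ) 1) (j : Fin n)
    (hsmall : ∀ k, k ≠ j → ρ k ≤ a) (ha : a < 1) :
    ∑ k ∈ univ.erase j, ρ k ^ 2 / (1 - ρ k ^ 2) ≤ (n - 1) / (1 - a) := by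
  have hterm : ∀ k ∈ univ.erase j, ρ k ^ 2 / (1 - ρ k ^ 2) ≤ 1 / (1 - a) := fun k hk =>
    (sq_div_one_sub_sq_le_div (hρ k).1 (hρ k).2).trans
      (div_one_sub_sq_le_one_div_one_sub (hρ k).1 (hsmall k (ne_of_mem_erase hk)) ha)
  calc ∑ k ∈ univ.erase j, ρ k ^ 2 / (1 - ρ k ^ 2)
      ≤ #(univ.erase j) • (1 / (1 - a)) := sum_le_card_nsmul _ _ _ hterm
    _ = (n - 1) / (1 - a) := by
      rw [card_erase_of_mem (mem_univ j), card_univ, Fintype.card_fin, nsmul_eq_mul,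
        Nat.cast_pred j.pos, mul_one_div]

lemma div_lt_lam_self {a : ℝ} (hρ : ∀ k, ρ k ∈ Set.Ico (0 : ℝ) 1) (j : Fin n)
    (hsmall : ∀ k, k ≠ j → ρ k ≤ a) (ha : a < 1) (hj : 0 < ρ j) :
    ρ j / (1 + 2 * n * (1 - ρ j) / (1 - a)) < lam n ρ j := by
  obtain ⟨-, hj1⟩ := hρ j
  set S := ∑ k ∈ univ.erase j, ρ k ^ 2 / (1 - ρ k ^ 2)
  have hS0 : 0 ≤ S := sum_nonneg fun k _ =>
    div_nonneg (sq_nonneg _) (by nlinarith [(hρ k).1, (hρ k).2])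
  have hsq : 0 < 1 - ρ j ^ 2 := by nlinarith
  have hgap : 0 < 2 * (1 - ρ j) / (1 - a) := div_pos (by linarith) (by linarith)
  rw [lam_self_eq j hsq.ne']
  refine div_lt_div_of_pos_left hj (by positivity) ?_
  calc 1 + (1 - ρ j ^ 2) * S
      ≤ 1 + 2 * (1 - ρ j) * ((n - 1) / (1 - a)) := by
        gcongr
        · exact one_sub_sq_le_two_mul_one_sub _
        · exact sum_erase_sq_div_le hρ j hsmall ha
    _ = 1 + 2 * n * (1 - ρ j) / (1 - a) - 2 * (1 - ρ j) / (1 - a) := by ring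
    _ < 1 + 2 * n * (1 - ρ j) / (1 - a) := by linarith

lemma lam_le_mul_one_sub_sq (hρ : ∀ k, ρ k ∈ Set.Ico (0 : ℝ) 1) (i j : Fin n) :
    lam n ρ i ≤ ρ i / (1 - ρ i ^ 2) * (1 - ρ j ^ 2) := by
  have hsq : ∀ k, 0 < 1 - ρ k ^ 2 := fun k => by nlinarith [(hρ k).1, (hρ k).2]
  have hD : 1 / (1 - ρ j ^ 2) ≤ 1 + ∑ k, ρ k ^ 2 / (1 - ρ k ^ 2) := by
    rw [← one_add_sq_div_one_sub_sq (hsq j).ne']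
    gcongr
    exact single_le_sum (fun k _ => div_nonneg (sq_nonneg _) (hsq k).le) (mem_univ j)
  calc lam n ρ i ≤ ρ i / (1 - ρ i ^ 2) / (1 / (1 - ρ j ^ 2)) :=
        div_le_div_of_nonneg_left (div_nonneg (hρ i).1 (hsq i).le) (by simpa using hsq j) hD
    _ = ρ i / (1 - ρ i ^ 2) * (1 - ρ j ^ 2) := by rw [one_div, div_inv_eq_mul]

lemma lam_le_of_ne {a : ℝ} (hρ : ∀ k, ρ k ∈ Set.Ico (0 : ℝ) 1) {i j : Fin n} (hi : ρ i ≤ a)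
    (ha : a < 1) : lam n ρ i ≤ 2 * (1 - ρ j) / (1 - a) :=
  calc lam n ρ i ≤ ρ i / (1 - ρ i ^ 2) * (1 - ρ j ^ 2) := lam_le_mul_one_sub_sq hρ i j
    _ ≤ 1 / (1 - a) * (2 * (1 - ρ j)) :=
      mul_le_mul (div_one_sub_sq_le_one_div_one_sub (hρ i).1 hi ha)
        (one_sub_sq_le_two_mul_one_sub _) (by nlinarith [(hρ j).1, (hρ j).2])
        (div_nonneg zero_le_one (by linarith))
    _ = 2 * (1 - ρ j) / (1 - a) := by ring

end Lam

/-- If `ρ_i ≤ α` for all `i ≠ 1` and `ρ_1 > β`, then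
`λ_1(ρ) > ρ_1 / (1 + 2n(1 − ρ_1)/(1 − α))` and
`λ_i(ρ) ≤ 2(1 − ρ_1)/(β²(1 − α))` for all `i ≠ 1`. -/
theorem lam_bounds (n : ℕ) (hn : 2 ≤ n) (α β : ℝ)
    (hα : α ∈ Set.Ioo (0 : ℝ) 1) (hβ : β ∈ Set.Ioo (0 : ℝ) 1)
    (ρ : Fin n → ℝ) (hρ : ∀ i, ρ i ∈ Set.Ico (0 : ℝ) 1)
    (hsmall : ∀ i : Fin n, i ≠ ⟨0, by omega⟩ → ρ i ≤ α)
    (hbig : β < ρ ⟨0, by omega⟩) :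
    ρ ⟨0, by omega⟩ / (1 + 2 * n * (1 - ρ ⟨0, by omega⟩) / (1 - α))
        < lam n ρ ⟨0, by omega⟩ ∧
    ∀ i : Fin n, i ≠ ⟨0, by omega⟩ →
      lam n ρ i ≤ 2 * (1 - ρ ⟨0, by omega⟩) / (β ^ 2 * (1 - α)) := by
  obtain ⟨-, hα1⟩ := hα
  obtain ⟨hβ0, hβ1⟩ := hβ
  refine ⟨div_lt_lam_self hρ _ hsmall hα1 (hβ0.trans hbig), fun i hi => ?_⟩
  calc lam n ρ i ≤ 2 * (1 - ρ ⟨0, by omega⟩) / (1 - α) := lam_le_of_ne hρ (hsmall i hi) hα1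
    _ ≤ 2 * (1 - ρ ⟨0, by omega⟩) / (β ^ 2 * (1 - α)) := by
      have hβsq : β ^ 2 ≤ 1 := pow_le_one₀ hβ0.le hβ1.le
      gcongr
      · linarith [(hρ ⟨0, by omega⟩).2]
      · exact mul_le_of_le_one_left (by linarith) hβsq
end
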